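/- arXiv:1907.05508 — 13 statements merged into one kernel-verified Lean document; each statement's English description precedes it below -/
import Mathlib

section
/- Let λ ∈ F_{q^m}^* be such that the norm N(λ) = λ^{(q^m-1)/(q-1)} has multiplicative order exactly q-1 in F_q^*. Then a polynomial f ∈ F_{q^m}[x] is fixed by φ_{q,λ} if and only if f has the form Σ_j c_j λ^{-j} x^{(q-1)j} with all c_j ∈ F_q. -/
/-- If N(λ) = λ^((q^m-1)/(q-1)) has multiplicative order exactly q-1,
then f ∈ F_{q^m}[x] is fixed by φ_{q,λ} iff f = Σ_j c_j λ^{-j} x^(q-1)j with c_j ∈ F_q. -/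
theorem stmt_2 (p s m : ℕ) [Fact p.Prime] (hs : 0 < s) (hm : 0 < m)
    (F : Type*) [Field F] [Fintype F] [CharP F p]
    (q : ℕ) (hq : q = p ^ s) (hcard : Fintype.card F = q ^ m)
    (lam : F) (hlam : lam ≠ 0)
    (hnorm : orderOf (lam ^ ((q ^ m - 1) / (q - 1))) = q - 1)
    (f : Polynomial F) :
    (∀ i : ℕ, (f.coeff i) ^ q * lam ^ i = f.coeff i) ↔
      ∃ (k : ℕ) (c : ℕ → F), (∀ j, (c j) ^ q = c j) ∧
        f = ∑ j ∈ Finset.range (k + 1),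
              Polynomial.C (c j * lam⁻¹ ^ j) * Polynomial.X ^ ((q - 1) * j) := by
  have hp2 : 2 ≤ p := (Fact.out : p.Prime).two_le
  have hq2 : 2 ≤ q := by
    rw [hq]
    calc 2 = 2 ^ 1 := (pow_one 2).symm
    _ ≤ p ^ s := Nat.pow_le_pow_left hp2 1 |>.trans (Nat.pow_le_pow_right (by omega) hs)
  have hq1 : 1 ≤ q - 1 := by omega
  set n : ℕ := (q ^ m - 1) / (q - 1) with hn
  have hdvd : (q - 1) ∣ q ^ m - 1 := by
    have := Nat.sub_dvd_pow_sub_pow q 1 m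
    simpa using this
  have hmuln : (q - 1) * n = q ^ m - 1 := Nat.mul_div_cancel' hdvd
  have hunits : ∀ a : F, a ≠ 0 → a ^ (q ^ m - 1) = 1 := by
    intro a ha
    rw [← hcard]
    exact FiniteField.pow_card_sub_one_eq_one a ha
  have hqj : ∀ j : ℕ, (q - 1) * j + j = q * j := by
    intro j
    rw [Nat.sub_one_mul, Nat.sub_add_cancel (Nat.le_mul_of_pos_left j (by omega))]
  have hpow : ∀ j : ℕ, (lam⁻¹) ^ (q * j) * lam ^ ((q - 1) * j) = (lam⁻¹) ^ j := by
    intro j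
    rw [inv_pow, inv_pow, ← hqj j, pow_add]
    field_simp
  constructor
  · intro h
    -- nonzero coefficients occur only at multiples of q-1
    have hdvdi : ∀ i : ℕ, f.coeff i ≠ 0 → (q - 1) ∣ i := by
      intro i hi
      have h1 : f.coeff i ^ (q - 1) * lam ^ i = 1 := by
        have h2 := h i
        have h3 : f.coeff i ^ q = f.coeff i ^ (q - 1) * f.coeff i := by
          rw [← pow_succ]
          congr 1
          omega
        rw [h3] at h2
        apply mul_right_cancel₀ hi
        rw [one_mul]
        calc f.coeff i ^ (q - 1) * lam ^ i * f.coeff i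
            = f.coeff i ^ (q-1) * f.coeff i * lam ^ i := by ring
          _ = f.coeff i := h2
      have h5 := congrArg (· ^ n) h1
      simp only [mul_pow, one_pow, ← pow_mul] at h5
      rw [hmuln, hunits _ hi, one_mul] at h5
      have h4 : (lam ^ n) ^ i = 1 := by
        rw [← pow_mul, Nat.mul_comm]; exact h5
      have h6 : orderOf (lam ^ n) ∣ i := orderOf_dvd_of_pow_eq_one h4
      rwa [hnorm] at h6
    refine ⟨f.natDegree, fun j => f.coeff ((q - 1) * j) * lam ^ j, ?_, ?_⟩
    · intro j
      have h2 := h ((q - 1) * j)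
      have hql : lam ^ (q * j) = lam ^ ((q - 1) * j) * lam ^ j := by
        rw [← pow_add, hqj j]
      rw [mul_pow, ← pow_mul, mul_comm j q, hql]
      calc f.coeff ((q-1)*j) ^ q * (lam ^ ((q-1)*j) * lam ^ j)
          = (f.coeff ((q-1)*j) ^ q * lam ^ ((q-1)*j)) * lam ^ j := by ring
        _ = f.coeff ((q-1)*j) * lam ^ j := by rw [h2]
    · ext i
      rw [Polynomial.finset_sum_coeff]
      simp only [Polynomial.coeff_C_mul, Polynomial.coeff_X_pow, mul_ite, mul_one, mul_zero]
      by_cases hz : f.coeff i = 0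
      · rw [hz]
        refine (Finset.sum_eq_zero ?_).symm
        intro j _
        split_ifs with he
        · rw [mul_assoc, ← mul_pow, mul_inv_cancel₀ hlam, one_pow, mul_one, ← he, hz]
        · rfl
      · obtain ⟨j0, hj0⟩ := hdvdi i hz
        have hile : i ≤ f.natDegree := Polynomial.le_natDegree_of_ne_zero hz
        have hj0le : j0 ≤ f.natDegree := by
          have : j0 ≤ i := by
            calc j0 = 1 * j0 := (one_mul j0).symm
            _ ≤ (q - 1) * j0 := Nat.mul_le_mul_right j0 hq1
            _ = i := hj0.symm
          omega
        rw [Finset.sum_eq_single j0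
            (fun b _ hb => by
              rw [if_neg]
              intro he
              exact hb (Nat.eq_of_mul_eq_mul_left (by omega) (hj0.symm.trans he)).symm)
            (fun hmem => absurd (Finset.mem_range.mpr (by omega)) hmem),
          if_pos hj0, mul_assoc, ← mul_pow, mul_inv_cancel₀ hlam, one_pow, mul_one, ← hj0]
  · rintro ⟨k, c, hc, rfl⟩
    intro i
    rw [Polynomial.finset_sum_coeff]
    simp only [Polynomial.coeff_C_mul, Polynomial.coeff_X_pow, mul_ite, mul_one, mul_zero]
    by_cases hex : ∃ j ∈ Finset.range (k + 1), i = (q - 1) * j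
    · obtain ⟨j0, hj0mem, hj0⟩ := hex
      rw [Finset.sum_eq_single j0
          (fun b _ hb => by
            rw [if_neg]
            intro he
            exact hb (Nat.eq_of_mul_eq_mul_left (by omega) (hj0.symm.trans he)).symm)
          (fun hmem => absurd hj0mem hmem),
        if_pos hj0, hj0]
      rw [mul_pow, hc j0, ← pow_mul, mul_comm j0 q, mul_assoc, hpow j0]
    · rw [Finset.sum_eq_zero]
      · rw [zero_pow (by omega), zero_mul]
      · intro j hj
        rw [if_neg]
        intro he
        exact hex ⟨j, hj, he⟩
end

section
/- Let λ ∈ F_{q^m}^* be such that N(λ) has order q-1 in F_q^*, and suppose f_i^q λ^i = f_i with f_i ≠ 0 for some index i. Then (q-1) divides i. -/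
/-- If N(λ) has order q-1 in F_q^* and f_i^q λ^i = f_i with f_i ≠ 0,
then (q-1) ∣ i. -/
theorem stmt_3 (p s m : ℕ) [Fact p.Prime] (hs : 0 < s) (hm : 0 < m)
    (F : Type*) [Field F] [Fintype F] [CharP F p]
    (q : ℕ) (hq : q = p ^ s) (hcard : Fintype.card F = q ^ m)
    (lam : F) (hlam : lam ≠ 0)
    (hnorm : orderOf (lam ^ ((q ^ m - 1) / (q - 1))) = q - 1)
    (i : ℕ) (fi : F) (hfi : fi ≠ 0) (hfix : fi ^ q * lam ^ i = fi) :
    (q - 1) ∣ i := by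
  have hq2 : 2 ≤ q := by
    rw [hq]
    calc 2 ≤ p := (Fact.out : p.Prime).two_le
    _ ≤ p ^ s := Nat.le_self_pow hs.ne' p
  set k := (q ^ m - 1) / (q - 1) with hk
  have hdvd : (q - 1) ∣ q ^ m - 1 := by
    simpa using Nat.sub_dvd_pow_sub_pow q 1 m
  have hmul : (q - 1) * k = q ^ m - 1 := Nat.mul_div_cancel' hdvd
  -- fi ^ (q^m - 1) = 1
  have hfi1 : fi ^ (q ^ m - 1) = 1 := by
    have := FiniteField.pow_card_sub_one_eq_one fi hfi
    rwa [hcard] at this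
  have hlami : lam ^ i = fi * (fi ^ q)⁻¹ := by
    field_simp
    linear_combination hfix
  have hqk : fi ^ (q * k) = fi ^ k := by
    have : q * k = k + (q - 1) * k := by
      have h1 : q - 1 + 1 = q := Nat.succ_pred_eq_of_pos (lt_of_lt_of_le (by norm_num) hq2)
      calc q * k = (q - 1 + 1) * k := by rw [h1]
      _ = k + (q - 1) * k := by ring
    rw [this, pow_add, hmul, hfi1, mul_one]
  have hkey : (lam ^ k) ^ i = 1 := by
    rw [← pow_mul, mul_comm, pow_mul, hlami, mul_pow, inv_pow, ← pow_mul, hqk]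
    field_simp
  have := orderOf_dvd_of_pow_eq_one hkey
  rwa [hnorm] at this
end

section
/- Let λ ∈ F_{q^m}^* with N(λ) of order q-1 in F_q^*. The field extension F_{q^m}(x) over K, where K = F_q(x^{q-1}/λ) is the field of constants of the extended automorphism φ_{q,λ} of F_{q^m}(x), has degree exactly m(q-1). -/
/-! The automorphism `e` restricts on `F[X]` to `f ↦ Σ fᵢ^q λ^i X^i`. Its `k`-th power is the
identity iff `a^(q^k) = a` on `F`, i.e. `m ∣ k`, and `λ^(1 + q + ⋯ + q^(k-1)) = 1`; for
`k = m d` the latter reads `N(λ)^d = 1`. Hence `e` has order `m(q-1)`, and by Artin's theorem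
the fixed field of the cyclic group generated by `e` has index `m(q-1)`. -/

/-- The fixed subfield of a field automorphism. -/
def fixedSubfield {F : Type*} [Field F] (e : F ≃+* F) : Subfield F where
  carrier := {a | e a = a}
  mul_mem' := by intro a b ha hb; simp only [Set.mem_setOf_eq, map_mul] at *; rw [ha, hb]
  one_mem' := by simp
  add_mem' := by intro a b ha hb; simp only [Set.mem_setOf_eq, map_add] at *; rw [ha, hb]
  zero_mem' := by simp
  neg_mem' := by intro a ha; simp only [Set.mem_setOf_eq, map_neg] at *; rw [ha]
  inv_mem' := by intro a ha; simp only [Set.mem_setOf_eq, map_inv₀] at *; rw [ha]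

open Polynomial Finset

theorem orderOf_eq_of_forall_pow_eq_one_iff {M : Type*} [Monoid M] {x : M} {n : ℕ}
    (h : ∀ k, x ^ k = 1 ↔ n ∣ k) : orderOf x = n :=
  Nat.dvd_antisymm (orderOf_dvd_of_pow_eq_one ((h n).2 dvd_rfl)) ((h _).1 (pow_orderOf_eq_one x))

theorem Nat.pow_sub_one_dvd_pow_sub_one_iff {q m k : ℕ} (hq : 1 < q) :
    q ^ m - 1 ∣ q ^ k - 1 ↔ m ∣ k := by
  rw [← Nat.gcd_eq_left_iff_dvd, Nat.pow_sub_one_gcd_pow_sub_one, ← Nat.gcd_eq_left_iff_dvd,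
    ← (Nat.pow_right_injective hq).eq_iff (a := m.gcd k)]
  have := Nat.one_le_pow (m.gcd k) q (by omega)
  have := Nat.one_le_pow m q (by omega)
  omega

section FixedSubfield

variable {K : Type*} [Field K]

theorem fixedSubfield_eq_fixedPoints_zpowers (e : K ≃+* K) :
    fixedSubfield e = FixedPoints.subfield (Subgroup.zpowers e) K := by
  ext x
  refine ⟨fun hx g => ?_, fun hx => hx ⟨e, Subgroup.mem_zpowers e⟩⟩
  have hg : (g : K ≃+* K) ∈ MulAction.stabilizer (K ≃+* K) x := Subgroup.zpowers_le.mpr hx g.2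
  exact hg

theorem rank_fixedSubfield_eq_orderOf {e : K ≃+* K} (he : IsOfFinOrder e) :
    Module.rank (fixedSubfield e) K = orderOf e := by
  have : Fintype (Subgroup.zpowers e) := Fintype.ofEquiv _ (finEquivZPowers he)
  rw [fixedSubfield_eq_fixedPoints_zpowers, ← Module.finrank_eq_rank,
    FixedPoints.finrank_eq_card, Fintype.card_eq_nat_card, Nat.card_zpowers]

end FixedSubfield

theorem orderOf_eq_orderOf_of_algebraMap {A K : Type*} [CommRing A] [Field K] [Algebra A K]
    [IsFractionRing A K] (e : K ≃+* K) (φ : A →+* A)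
    (h : ∀ a, e (algebraMap A K a) = algebraMap A K (φ a)) : orderOf e = orderOf φ := by
  have hpow : ∀ n a, (e ^ n) (algebraMap A K a) = algebraMap A K ((φ ^ n) a) := by
    intro n
    induction n with
    | zero => exact fun _ => rfl
    | succ n ih => intro a; rw [pow_succ', pow_succ']; exact (congrArg e (ih a)).trans (h _)
  refine orderOf_eq_orderOf_iff.mpr fun n => ⟨fun hn => ?_, fun hn => ?_⟩
  · ext a
    exact IsFractionRing.injective A K (by simpa [hn] using (hpow n a).symm)
  · suffices (e ^ n : K ≃+* K).toRingHom = RingHom.id K from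
      RingEquiv.ext (RingHom.ext_iff.1 this)
    refine IsLocalization.ringHom_ext (nonZeroDivisors A) (RingHom.ext fun a => ?_)
    rw [RingHom.comp_apply, RingEquiv.toRingHom_eq_coe, RingEquiv.coe_toRingHom, hpow, hn]
    rfl

namespace Polynomial

variable {R : Type*} [CommRing R]

/-- For `σ` the `q`-power Frobenius this is the paper's `φ_{q,c}`. -/
noncomputable def twistedSubst (σ : R →+* R) (c : R) : R[X] →+* R[X] :=
  eval₂RingHom (C.comp σ) (C c * X)

variable (σ : R →+* R) (c : R)

theorem twistedSubst_apply (f : R[X]) :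
    twistedSubst σ c f =
      ∑ i ∈ range (f.natDegree + 1), C (σ (f.coeff i) * c ^ i) * X ^ i := by
  simp only [twistedSubst, coe_eval₂RingHom, eval₂_eq_sum_range, RingHom.comp_apply, mul_pow,
    C_mul, map_pow, mul_assoc]

@[simp]
theorem twistedSubst_C (a : R) : twistedSubst σ c (C a) = C (σ a) := eval₂_C _ _

@[simp]
theorem twistedSubst_X : twistedSubst σ c X = C c * X := eval₂_X _ _

theorem twistedSubst_pow_C (k : ℕ) (a : R) :
    (twistedSubst σ c ^ k) (C a) = C ((σ ^ k) a) := by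
  induction k with
  | zero => rfl
  | succ k ih =>
    rw [pow_succ', RingHom.mul_def, RingHom.comp_apply, ih, twistedSubst_C, pow_succ']
    rfl

theorem twistedSubst_pow_X (k : ℕ) :
    (twistedSubst σ c ^ k) X = C (∏ j ∈ range k, (σ ^ j) c) * X := by
  induction k with
  | zero => simp
  | succ k ih =>
    rw [pow_succ', RingHom.mul_def, RingHom.comp_apply, ih, map_mul, twistedSubst_C,
      twistedSubst_X, map_prod, prod_range_succ', pow_zero, RingHom.coe_one, id]
    simp only [pow_succ', RingHom.mul_def, RingHom.comp_apply, C_mul]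
    ring

theorem twistedSubst_pow_eq_one_iff (k : ℕ) :
    twistedSubst σ c ^ k = 1 ↔ σ ^ k = 1 ∧ ∏ j ∈ range k, (σ ^ j) c = 1 := by
  constructor
  · intro h
    refine ⟨RingHom.ext fun a => C_injective ?_, ?_⟩
    · rw [← twistedSubst_pow_C, h]; rfl
    · have hX := congrArg (coeff · 1) (twistedSubst_pow_X σ c k)
      simp only [h, RingHom.coe_one, id, coeff_X_one, coeff_C_mul, mul_one] at hX
      exact hX.symm
  · rintro ⟨hσ, hc⟩
    refine ringHom_ext (fun a => ?_) ?_
    · rw [twistedSubst_pow_C, hσ]; rfl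
    · rw [twistedSubst_pow_X, hc, C_1, one_mul]; rfl

end Polynomial

section Norm

variable {R : Type*} [CommRing R] (σ : R →+* R) (c : R)

theorem prod_range_mul_eq_pow_of_pow_eq_one {m : ℕ} (hσ : σ ^ m = 1) (d : ℕ) :
    ∏ j ∈ range (m * d), (σ ^ j) c = (∏ j ∈ range m, (σ ^ j) c) ^ d := by
  induction d with
  | zero => simp
  | succ d ih =>
    have hperiod : ∀ j, σ ^ (m * d + j) = σ ^ j := fun j => by
      rw [pow_add, pow_mul, hσ, one_pow, one_mul]
    simp only [Nat.mul_succ, prod_range_add, hperiod, ih, pow_succ]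

theorem Polynomial.orderOf_twistedSubst {m n : ℕ} (hσ : orderOf σ = m)
    (hc : orderOf (∏ j ∈ range m, (σ ^ j) c) = n) : orderOf (twistedSubst σ c) = m * n := by
  have hσm : σ ^ m = 1 := hσ ▸ pow_orderOf_eq_one σ
  refine orderOf_eq_of_forall_pow_eq_one_iff fun k => ?_
  rw [twistedSubst_pow_eq_one_iff, ← orderOf_dvd_iff_pow_eq_one, hσ]
  constructor
  · rintro ⟨⟨d, rfl⟩, hprod⟩
    rw [prod_range_mul_eq_pow_of_pow_eq_one σ c hσm, ← orderOf_dvd_iff_pow_eq_one, hc] at hprod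
    exact mul_dvd_mul_left m hprod
  · rintro ⟨d, rfl⟩
    refine ⟨dvd_mul_of_dvd_left (dvd_mul_right m n) d, ?_⟩
    rw [mul_assoc, prod_range_mul_eq_pow_of_pow_eq_one σ c hσm, pow_mul, ← hc,
      pow_orderOf_eq_one, one_pow]

end Norm

theorem FiniteField.forall_pow_pow_eq_self_iff {F : Type*} [Field F] [Fintype F] {q m : ℕ}
    (hcard : Fintype.card F = q ^ m) (k : ℕ) : (∀ a : F, a ^ q ^ k = a) ↔ m ∣ k := by
  have hq : 1 < q := by
    by_contra! h
    have := pow_le_one₀ (Nat.zero_le q) h (n := m)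
    have := Fintype.one_lt_card (α := F)
    omega
  have hQ : 1 ≤ q ^ k := Nat.one_le_pow _ _ (by omega)
  rw [← Nat.pow_sub_one_dvd_pow_sub_one_iff hq, ← hcard, ← FiniteField.forall_pow_eq_one_iff]
  constructor
  · intro h x
    refine Units.ext (mul_right_cancel₀ x.ne_zero ?_)
    rw [Units.val_pow_eq_pow_val, ← pow_succ, Nat.sub_add_cancel hQ, h, Units.val_one, one_mul]
  · intro h a
    rcases eq_or_ne a 0 with rfl | ha
    · exact zero_pow (by omega)
    · have hunit := congrArg Units.val (h (Units.mk0 a ha))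
      rw [Units.val_pow_eq_pow_val, Units.val_mk0, Units.val_one] at hunit
      rw [← Nat.sub_add_cancel hQ, pow_succ, hunit, one_mul]

section Frobenius

variable {R : Type*} [CommRing R] (p s : ℕ) [ExpChar R p]

theorem iterateFrobenius_pow_apply (k : ℕ) (a : R) :
    (iterateFrobenius R p s ^ k) a = a ^ (p ^ s) ^ k := by
  rw [RingHom.coe_pow, ← coe_iterateFrobenius_mul, iterateFrobenius_def, pow_mul]

theorem prod_range_iterateFrobenius_pow_apply (hp : 2 ≤ p ^ s) (m : ℕ) (c : R) :
    ∏ j ∈ range m, (iterateFrobenius R p s ^ j) c = c ^ (((p ^ s) ^ m - 1) / (p ^ s - 1)) := by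
  simp only [iterateFrobenius_pow_apply, prod_pow_eq_pow_sum, Nat.geomSum_eq hp]

theorem FiniteField.orderOf_iterateFrobenius {F : Type*} [Field F] [Fintype F] [ExpChar F p]
    {m : ℕ} (hcard : Fintype.card F = (p ^ s) ^ m) : orderOf (iterateFrobenius F p s) = m :=
  orderOf_eq_of_forall_pow_eq_one_iff fun k => by
    simp only [← forall_pow_pow_eq_self_iff hcard, RingHom.ext_iff, iterateFrobenius_pow_apply,
      RingHom.coe_one, id]

end Frobenius

theorem stmt_4_general (p s m : ℕ) [Fact p.Prime] (hs : 0 < s) (hm : 0 < m)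
    (F : Type*) [Field F] [Fintype F] [CharP F p]
    (q : ℕ) (hq : q = p ^ s) (hcard : Fintype.card F = q ^ m)
    (lam : F)
    (hnorm : orderOf (lam ^ ((q ^ m - 1) / (q - 1))) = q - 1)
    (e : RatFunc F ≃+* RatFunc F)
    (he : ∀ f : Polynomial F,
      e (algebraMap (Polynomial F) (RatFunc F) f) =
        algebraMap (Polynomial F) (RatFunc F)
          (∑ i ∈ Finset.range (f.natDegree + 1),
            Polynomial.C ((f.coeff i) ^ q * lam ^ i) * Polynomial.X ^ i)) :
    Module.rank (fixedSubfield e) (RatFunc F) = (m * (q - 1) : ℕ) := by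
  subst hq
  have : ExpChar F p := ExpChar.prime Fact.out
  have hp : 2 ≤ p ^ s := Nat.le_self_pow hs.ne' p |>.trans' (Fact.out : p.Prime).two_le
  have he_twisted (f : F[X]) :
      e (algebraMap F[X] (RatFunc F) f) = algebraMap F[X] (RatFunc F)
        (twistedSubst (iterateFrobenius F p s) lam f) := by
    rw [he, twistedSubst_apply]
    rfl
  have horder : orderOf e = m * (p ^ s - 1) := by
    rw [orderOf_eq_orderOf_of_algebraMap e _ he_twisted, orderOf_twistedSubst _ _
      (FiniteField.orderOf_iterateFrobenius p s hcard)]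
    rwa [prod_range_iterateFrobenius_pow_apply p s hp]
  rw [rank_fixedSubfield_eq_orderOf (orderOf_pos_iff.mp (horder ▸ Nat.mul_pos hm (by omega))),
    horder]

/-- With N(λ) of order q-1 in F_q^*, the extension F_{q^m}(x)/K, where K is
the field of constants of the extended automorphism φ_{q,λ}, has degree m(q-1). -/
theorem stmt_4 (p s m : ℕ) [Fact p.Prime] (hs : 0 < s) (hm : 0 < m)
    (F : Type*) [Field F] [Fintype F] [CharP F p]
    (q : ℕ) (hq : q = p ^ s) (hcard : Fintype.card F = q ^ m)
    (lam : F) (hlam : lam ≠ 0)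
    (hnorm : orderOf (lam ^ ((q ^ m - 1) / (q - 1))) = q - 1)
    (e : RatFunc F ≃+* RatFunc F)
    (he : ∀ f : Polynomial F,
      e (algebraMap (Polynomial F) (RatFunc F) f) =
        algebraMap (Polynomial F) (RatFunc F)
          (∑ i ∈ Finset.range (f.natDegree + 1),
            Polynomial.C ((f.coeff i) ^ q * lam ^ i) * Polynomial.X ^ i)) :
    Module.rank (fixedSubfield e) (RatFunc F) = (m * (q - 1) : ℕ) :=
  stmt_4_general p s m hs hm F q hq hcard lam hnorm e he
end

section
/- Let λ ∈ F_{q^m}^* with N(λ) of order q-1 in F_q^*, let {a_1,...,a_m} be a basis of F_{q^m} over F_q, and let K be the fixed field of φ_{q,λ} in F_{q^m}(x). Then the set B = {a_i x^j : 1 ≤ i ≤ m, 0 ≤ j ≤ q-2} of m(q-1) elements is a basis of F_{q^m}(x) as a K-vector space. -/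
theorem Nat.dvd_of_pow_sub_one_dvd_pow_sub_one {q m k : ℕ} (hq : 2 ≤ q)
    (h : q ^ m - 1 ∣ q ^ k - 1) : m ∣ k := by
  have hgcd : q ^ Nat.gcd m k = q ^ m := by
    have := Nat.pow_sub_one_gcd_pow_sub_one q m k
    rw [Nat.gcd_eq_left h] at this
    have h1 := Nat.one_le_pow (Nat.gcd m k) q (by omega)
    have h2 := Nat.one_le_pow m q (by omega)
    omega
  rw [← Nat.gcd_eq_left_iff_dvd, Nat.pow_right_injective hq hgcd]

theorem FiniteField.dvd_of_forall_pow_pow_eq_self {F : Type*} [Field F] [Fintype F]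
    {q m k : ℕ} (hq : 2 ≤ q) (hcard : Fintype.card F = q ^ m) (h : ∀ c : F, c ^ q ^ k = c) :
    m ∣ k := by
  refine Nat.dvd_of_pow_sub_one_dvd_pow_sub_one hq ?_
  rw [← hcard, ← FiniteField.forall_pow_eq_one_iff]
  intro x
  have hx : x ^ q ^ k = x := Units.ext (by simpa using h x)
  rwa [← mul_left_cancel_iff (a := x), ← pow_succ',
    Nat.sub_add_cancel (Nat.one_le_pow k q (by omega)), mul_one]

section FixedSubfield

variable {L : Type*} [Field L] {σ : L ≃+* L}

@[simp]
theorem mem_fixedSubfield {x : L} : x ∈ fixedSubfield σ ↔ σ x = x := Iff.rfl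

theorem fixedSubfield_eq_fixedPoints (σ : L ≃+* L) :
    fixedSubfield σ = FixedPoints.subfield (Subgroup.zpowers σ) L := by
  ext x
  exact ⟨fun hx g => (Subgroup.zpowers_le (H := MulAction.stabilizer (L ≃+* L) x)).mpr hx g.2,
    fun hx => hx ⟨σ, Subgroup.mem_zpowers σ⟩⟩

theorem IsOfFinOrder.finiteDimensional_fixedSubfield (hσ : IsOfFinOrder σ) :
    FiniteDimensional (fixedSubfield σ) L := by
  have : Finite (Subgroup.zpowers σ) := hσ.finite_zpowers.to_subtype
  have := Fintype.ofFinite (Subgroup.zpowers σ)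
  rw [fixedSubfield_eq_fixedPoints]
  infer_instance

theorem IsOfFinOrder.finrank_fixedSubfield (hσ : IsOfFinOrder σ) :
    Module.finrank (fixedSubfield σ) L = orderOf σ := by
  have : Finite (Subgroup.zpowers σ) := hσ.finite_zpowers.to_subtype
  have := Fintype.ofFinite (Subgroup.zpowers σ)
  have : FaithfulSMul (Subgroup.zpowers σ) L :=
    ⟨fun H => Subtype.ext (RingEquiv.ext H)⟩
  rw [fixedSubfield_eq_fixedPoints, FixedPoints.finrank_eq_card, ← Nat.card_eq_fintype_card,
    Nat.card_zpowers]

end FixedSubfield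

theorem Subring.span_eq_top_of_forall_eq_div {K L : Type*} [Field K] [Field L] [Algebra K L]
    [FiniteDimensional K L] (R : Subring L) (hR : ∀ z : L, ∃ a ∈ R, ∃ b ∈ R, z = a / b) :
    Submodule.span K (R : Set L) = ⊤ := by
  have hA : Subalgebra.toSubmodule (Algebra.adjoin K (R : Set L)) = Submodule.span K R := by
    rw [Algebra.adjoin_eq_span, ← R.coe_toSubmonoid, Submonoid.closure_eq]
  rw [← hA, eq_top_iff]
  rintro z -
  obtain ⟨a, ha, b, hb, rfl⟩ := hR z
  have := Algebra.IsAlgebraic.of_finite K L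
  have hb' : b⁻¹ ∈ Algebra.adjoin K (R : Set L) :=
    (Algebra.adjoin K (R : Set L)).inv_mem_of_algebraic (x := ⟨b, Algebra.subset_adjoin hb⟩)
      (Algebra.IsAlgebraic.isAlgebraic b)
  rw [div_eq_mul_inv]
  exact (Algebra.adjoin K (R : Set L)).mul_mem (Algebra.subset_adjoin ha) hb'

namespace RatFunc

variable {F : Type*} [Field F] {σ : RatFunc F ≃+* RatFunc F}

theorem ringEquiv_eq_one_of_map_C_of_map_X (hC : ∀ c : F, σ (C c) = C c) (hX : σ X = X) :
    σ = 1 := by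
  have hpoly : (σ : RatFunc F →+* RatFunc F).comp (algebraMap (Polynomial F) (RatFunc F)) =
      (RingHom.id _).comp (algebraMap (Polynomial F) (RatFunc F)) :=
    Polynomial.ringHom_ext hC hX
  ext x
  exact DFunLike.congr_fun (IsLocalization.ringHom_ext (nonZeroDivisors (Polynomial F)) hpoly) x

theorem pow_apply_C {q : ℕ} (hC : ∀ c : F, σ (C c) = C (c ^ q)) (k : ℕ) (c : F) :
    (σ ^ k) (C c) = C (c ^ q ^ k) := by
  induction k generalizing c with
  | zero => simp
  | succ k ih => rw [pow_succ, RingAut.mul_apply, hC, ih, ← pow_mul, ← pow_succ']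

theorem pow_apply_X {q : ℕ} {lam : F} (hC : ∀ c : F, σ (C c) = C (c ^ q))
    (hX : σ X = C lam * X) (k : ℕ) :
    (σ ^ k) X = C (lam ^ ∑ i ∈ Finset.range k, q ^ i) * X := by
  induction k with
  | zero => simp
  | succ k ih =>
    rw [pow_succ, RingAut.mul_apply, hX, map_mul, ih, pow_apply_C hC, ← mul_assoc, ← map_mul,
      ← pow_add, Finset.sum_range_succ, add_comm]

theorem orderOf_eq_orderOf_of_map_X_eq_C_mul {n : F} (hC : ∀ c : F, σ (C c) = C c)
    (hX : σ X = C n * X) : orderOf σ = orderOf n := by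
  have hC' : ∀ c : F, σ (C c) = C (c ^ 1) := by simpa using hC
  have hpowX : ∀ k, (σ ^ k) X = C (n ^ k) * X := by simpa using pow_apply_X hC' hX
  refine orderOf_eq_orderOf_iff.mpr fun k => ⟨fun hk => C_injective ?_, fun hk => ?_⟩
  · have := hpowX k
    rw [hk, RingAut.one_apply] at this
    rw [map_one]
    exact (mul_eq_right₀ X_ne_zero).mp this.symm
  · exact ringEquiv_eq_one_of_map_C_of_map_X (by simpa using pow_apply_C hC' k)
      (by rw [hpowX, hk, map_one, one_mul])

theorem orderOf_eq_mul_of_map_C_pow [Fintype F] {q m : ℕ} (hq : 2 ≤ q) (hm : m ≠ 0)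
    (hcard : Fintype.card F = q ^ m) {lam : F}
    (hnorm : orderOf (lam ^ ((q ^ m - 1) / (q - 1))) = q - 1)
    (hC : ∀ c : F, σ (C c) = C (c ^ q)) (hX : σ X = C lam * X) :
    orderOf σ = m * (q - 1) := by
  have hm_dvd : m ∣ orderOf σ := by
    refine FiniteField.dvd_of_forall_pow_pow_eq_self hq hcard fun c => C_injective ?_
    rw [← pow_apply_C hC, pow_orderOf_eq_one, RingAut.one_apply]
  have hσm : orderOf (σ ^ m) = q - 1 := by
    rw [← hnorm, ← Nat.geomSum_eq hq]
    refine orderOf_eq_orderOf_of_map_X_eq_C_mul (fun c => ?_) (pow_apply_X hC hX m)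
    rw [pow_apply_C hC, ← hcard, FiniteField.pow_card]
  rw [orderOf_pow_of_dvd hm hm_dvd] at hσm
  rw [← hσm, Nat.mul_div_cancel' hm_dvd]

theorem C_inv_mul_X_pow_mem_fixedSubfield {q : ℕ} (hq : q ≠ 0) {lam : F} (hlam : lam ≠ 0)
    (hC : ∀ c : F, σ (C c) = C (c ^ q)) (hX : σ X = C lam * X) :
    C lam⁻¹ * X ^ (q - 1) ∈ fixedSubfield σ := by
  obtain ⟨r, rfl⟩ : ∃ r, q = r + 1 := ⟨q - 1, by omega⟩
  have : lam⁻¹ ^ (r + 1) * lam ^ r = lam⁻¹ := by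
    rw [pow_succ, inv_pow]
    field_simp
  rw [Nat.add_sub_cancel, mem_fixedSubfield, map_mul, map_pow, hC, hX, mul_pow, ← mul_assoc,
    ← map_pow, ← map_mul, this]

theorem C_mul_X_pow_mem_span {ι : Type*} [Fintype ι] {K : Subfield (RatFunc F)}
    {k : Subfield F} (a : Module.Basis ι k F) (hk : ∀ c ∈ k, C c ∈ K) {n : ℕ} (hn : 0 < n)
    {μ : F} (hμ : μ ≠ 0) (hy : C μ * X ^ n ∈ K) (c : F) (t : ℕ) :
    C c * X ^ t ∈
      Submodule.span K (Set.range fun ij : ι × Fin n => C (a ij.1) * X ^ (ij.2 : ℕ)) := by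
  set S := Submodule.span K (Set.range fun ij : ι × Fin n => C (a ij.1) * X ^ (ij.2 : ℕ))
  have hlow : ∀ (c : F) (r : Fin n), C c * X ^ (r : ℕ) ∈ S := by
    intro c r
    rw [← a.sum_repr c, map_sum, Finset.sum_mul]
    refine Submodule.sum_mem _ fun i _ => ?_
    have : C (a.repr c i • a i) * X ^ (r : ℕ) =
        (⟨C (a.repr c i), hk _ (a.repr c i).2⟩ : K) • (C (a i) * X ^ (r : ℕ)) := by
      simp [Subfield.smul_def, mul_assoc]
    rw [this]
    exact Submodule.smul_mem _ _ (Submodule.subset_span ⟨(i, r), rfl⟩)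
  have hsplit : C c * X ^ t = (⟨(C μ * X ^ n) ^ (t / n), pow_mem hy _⟩ : K) •
      (C (c / μ ^ (t / n)) * X ^ (t % n)) := by
    rw [Subfield.smul_def, smul_eq_mul]
    change _ = (C μ * X ^ n) ^ (t / n) * _
    rw [mul_pow, ← map_pow, ← pow_mul, map_div₀]
    conv_lhs => rw [← Nat.div_add_mod t n]
    have : C (μ ^ (t / n)) ≠ 0 := (map_ne_zero C).mpr (pow_ne_zero _ hμ)
    rw [pow_add]
    field_simp
  rw [hsplit]
  exact Submodule.smul_mem _ _ (hlow _ ⟨t % n, Nat.mod_lt _ hn⟩)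

theorem span_C_mul_X_pow_eq_top {ι : Type*} [Fintype ι] {K : Subfield (RatFunc F)}
    [FiniteDimensional K (RatFunc F)] {k : Subfield F} (a : Module.Basis ι k F)
    (hk : ∀ c ∈ k, C c ∈ K) {n : ℕ} (hn : 0 < n) {μ : F} (hμ : μ ≠ 0) (hy : C μ * X ^ n ∈ K) :
    Submodule.span K (Set.range fun ij : ι × Fin n => C (a ij.1) * X ^ (ij.2 : ℕ)) = ⊤ := by
  refine eq_top_iff.mpr <| (Subring.span_eq_top_of_forall_eq_div
    (algebraMap (Polynomial F) (RatFunc F)).range fun z => ?_).ge.trans <| Submodule.span_le.mpr ?_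
  · exact ⟨_, ⟨z.num, rfl⟩, _, ⟨z.denom, rfl⟩, (num_div_denom z).symm⟩
  · rintro _ ⟨f, rfl⟩
    induction f using Polynomial.induction_on' with
    | add f g hf hg => rw [map_add]; exact add_mem hf hg
    | monomial t c => rw [algebraMap_monomial]; exact C_mul_X_pow_mem_span a hk hn hμ hy c t

end RatFunc

theorem stmt_6_general (m : ℕ)
    (F : Type*) [Field F] [Fintype F]
    (q : ℕ) (hcard : Fintype.card F = q ^ m)
    (lam : F) (hlam : lam ≠ 0)
    (hnorm : orderOf (lam ^ ((q ^ m - 1) / (q - 1))) = q - 1)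
    (Fq : Subfield F) (hFq : ∀ a : F, a ∈ Fq ↔ a ^ q = a)
    (a : Module.Basis (Fin m) Fq F)
    (e : RatFunc F ≃+* RatFunc F)
    (he : ∀ f : Polynomial F,
      e (algebraMap (Polynomial F) (RatFunc F) f) =
        algebraMap (Polynomial F) (RatFunc F)
          (∑ i ∈ Finset.range (f.natDegree + 1),
            Polynomial.C ((f.coeff i) ^ q * lam ^ i) * Polynomial.X ^ i)) :
    ∃ b : Module.Basis (Fin m × Fin (q - 1)) (fixedSubfield e) (RatFunc F),
      ∀ (i : Fin m) (j : Fin (q - 1)),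
        b (i, j) = algebraMap F (RatFunc F) (a i) * RatFunc.X ^ (j : ℕ) := by
  open RatFunc in
  have hqm : 1 < q ^ m := hcard ▸ Fintype.one_lt_card
  have hm : m ≠ 0 := by rintro rfl; simp at hqm
  have hq : 2 ≤ q := (one_lt_pow_iff hm).mp hqm
  have hC : ∀ c : F, e (C c) = C (c ^ q) := fun c => by simpa using he (Polynomial.C c)
  have hX : e X = C lam * X := by
    simpa [Finset.sum_range_succ, zero_pow (by omega : q ≠ 0)] using he Polynomial.X
  have horder := orderOf_eq_mul_of_map_C_pow hq hm hcard hnorm hC hX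
  have hfin : IsOfFinOrder e :=
    orderOf_pos_iff.mp (by rw [horder]; exact Nat.mul_pos (by omega) (by omega))
  have := hfin.finiteDimensional_fixedSubfield
  have hk : ∀ c ∈ Fq, C c ∈ fixedSubfield e := fun c hc => by simp [hC, (hFq c).mp hc]
  have hspan := span_C_mul_X_pow_eq_top a hk (by omega) (inv_ne_zero hlam)
    (C_inv_mul_X_pow_mem_fixedSubfield (by omega) hlam hC hX)
  refine ⟨basisOfTopLeSpanOfCardEqFinrank _ hspan.ge ?_, fun i j => ?_⟩
  · rw [Fintype.card_prod, Fintype.card_fin, Fintype.card_fin, hfin.finrank_fixedSubfield, horder]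
  · rw [coe_basisOfTopLeSpanOfCardEqFinrank, algebraMap_eq_C]

/-- With N(λ) of order q-1, {a_i x^j : 1 ≤ i ≤ m, 0 ≤ j ≤ q-2} is a basis of
F_{q^m}(x) over the fixed field K of φ_{q,λ}. -/
theorem stmt_6 (p s m : ℕ) [Fact p.Prime] (hs : 0 < s) (hm : 0 < m)
    (F : Type*) [Field F] [Fintype F] [CharP F p]
    (q : ℕ) (hq : q = p ^ s) (hcard : Fintype.card F = q ^ m)
    (lam : F) (hlam : lam ≠ 0)
    (hnorm : orderOf (lam ^ ((q ^ m - 1) / (q - 1))) = q - 1)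
    (Fq : Subfield F) (hFq : ∀ a : F, a ∈ Fq ↔ a ^ q = a)
    (a : Module.Basis (Fin m) Fq F)
    (e : RatFunc F ≃+* RatFunc F)
    (he : ∀ f : Polynomial F,
      e (algebraMap (Polynomial F) (RatFunc F) f) =
        algebraMap (Polynomial F) (RatFunc F)
          (∑ i ∈ Finset.range (f.natDegree + 1),
            Polynomial.C ((f.coeff i) ^ q * lam ^ i) * Polynomial.X ^ i)) :
    ∃ b : Module.Basis (Fin m × Fin (q - 1)) (fixedSubfield e) (RatFunc F),
      ∀ (i : Fin m) (j : Fin (q - 1)),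
        b (i, j) = algebraMap F (RatFunc F) (a i) * RatFunc.X ^ (j : ℕ) :=
  stmt_6_general m F q hcard lam hlam hnorm Fq hFq a e he
end

section
/- The elements {a_i x^j : 1 ≤ i ≤ m, 0 ≤ j ≤ q-2} are linearly independent over the ring A = { Σ_l c_l λ^{-l} x^{(q-1)l} : c_l ∈ F_q } ⊆ F_{q^m}[x], where {a_1,...,a_m} is a basis of F_{q^m}/F_q. That is, if Σ_{j=0}^{q-2} Σ_{i=1}^m f_{i,j}(x) a_i x^j = 0 with all f_{i,j} ∈ A, then all f_{i,j} = 0. -/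
/-!
Every element of `A` is `expand (q - 1) g` for a polynomial `g` whose `l`-th coefficient lies in
`F_q · λ^{-l}`. Since `0 ≤ j < q - 1`, the summands `expand (q - 1) (…) · x^j` of the relation live
on pairwise disjoint residue classes of exponents modulo `q - 1`, so each `∑ᵢ gᵢⱼ a_i` vanishes.
Comparing the coefficients of `x^l` there gives `λ^{-l} ∑ᵢ cᵢ a_i = 0` with `cᵢ ∈ F_q`, and the
`F_q`-independence of the `a_i` forces every coefficient of every `gᵢⱼ` to be zero.
-/

open Polynomial

lemma Nat.eq_of_mul_add_eq_mul_add {d l e j j' : ℕ} (hj : j < d) (hj' : j' < d)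
    (h : d * l + j = d * e + j') : j = j' := by
  have := congrArg (· % d) h
  simpa only [Nat.mul_add_mod, Nat.mod_eq_of_lt hj, Nat.mod_eq_of_lt hj'] using this

lemma Polynomial.eq_zero_of_sum_expand_mul_X_pow_eq_zero {R : Type*} [CommSemiring R] {d : ℕ}
    (G : Fin d → R[X]) (h : ∑ j : Fin d, expand R d (G j) * X ^ (j : ℕ) = 0) (j : Fin d) :
    G j = 0 := by
  have hd : 0 < d := j.pos
  ext l
  have hcoeff := congrArg (coeff · (d * l + j)) h
  simp only [finsetSum_coeff, coeff_mul_X_pow', coeff_zero] at hcoeff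
  rw [Finset.sum_eq_single j, if_pos (by omega), Nat.add_sub_cancel, mul_comm d l,
    coeff_expand_mul hd] at hcoeff
  · exact hcoeff
  · intro j' _ hj'
    split_ifs with hle
    · rw [coeff_expand hd, if_neg]
      rintro ⟨e, he⟩
      have hmod : d * l + j = d * e + j' := by omega
      exact hj' (Fin.ext (Nat.eq_of_mul_add_eq_mul_add j.isLt j'.isLt hmod).symm)
    · rfl
  · simp

lemma Module.Basis.mul_eq_zero_of_sum_mul_eq_zero {ι F : Type*} [Fintype ι] [Field F]
    {K : Subfield F} (b : Module.Basis ι K F) {c : ι → F} (hc : ∀ i, c i ∈ K) (ν : F)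
    (h : ∑ i, c i * ν * b i = 0) (i : ι) : c i * ν = 0 := by
  by_cases hν : ν = 0
  · rw [hν, mul_zero]
  have hsum : ∑ i, (⟨c i, hc i⟩ : K) • b i = 0 := by
    have : (∑ i, c i * b i) * ν = 0 := by
      rw [← h, Finset.sum_mul]
      exact Finset.sum_congr rfl fun i _ => by ring
    exact (mul_eq_zero.mp this).resolve_right hν
  have := Fintype.linearIndependent_iff.mp b.linearIndependent _ hsum i
  rw [show c i = 0 from congrArg Subtype.val this, zero_mul]

lemma Polynomial.eq_zero_of_sum_mul_C_basis_eq_zero {ι F : Type*} [Fintype ι] [Field F]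
    {K : Subfield F} (b : Module.Basis ι K F) (μ : F) (g : ι → F[X])
    (hg : ∀ i n, ∃ c ∈ K, (g i).coeff n = c * μ ^ n) (h : ∑ i, g i * C (b i) = 0) (i : ι) :
    g i = 0 := by
  ext n
  choose c hcK hc using fun i => hg i n
  have hcoeff := congrArg (coeff · n) h
  simp only [finsetSum_coeff, coeff_mul_C, hc, coeff_zero] at hcoeff
  rw [hc, coeff_zero]
  exact b.mul_eq_zero_of_sum_mul_eq_zero hcK _ hcoeff i

lemma Polynomial.coeff_sum_C_mul_pow_mul_X_pow {F : Type*} [Field F] {K : Subfield F}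
    (μ : F) (k : ℕ) {c : ℕ → F} (hc : ∀ l, c l ∈ K) (n : ℕ) :
    ∃ c' ∈ K, (∑ l ∈ Finset.range (k + 1), C (c l * μ ^ l) * X ^ l).coeff n = c' * μ ^ n := by
  simp only [finsetSum_coeff, coeff_C_mul_X_pow, Finset.sum_ite_eq, Finset.mem_range]
  split_ifs
  · exact ⟨c n, hc n, rfl⟩
  · exact ⟨0, K.zero_mem, (zero_mul _).symm⟩

theorem stmt_7_general (m : ℕ) (F : Type*) [Field F] (q : ℕ) (lam : F) (Fq : Subfield F)
    (a : Module.Basis (Fin m) Fq F)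
    (f : Fin (q - 1) → Fin m → Polynomial F)
    (hfA : ∀ (j : Fin (q - 1)) (i : Fin m),
      ∃ (k : ℕ) (c : ℕ → F), (∀ l, c l ∈ Fq) ∧
        f j i = ∑ l ∈ Finset.range (k + 1),
          Polynomial.C (c l * lam⁻¹ ^ l) * Polynomial.X ^ ((q - 1) * l))
    (hsum : ∑ j : Fin (q - 1), ∑ i : Fin m,
      f j i * Polynomial.C (a i) * Polynomial.X ^ (j : ℕ) = 0) :
    ∀ (j : Fin (q - 1)) (i : Fin m), f j i = 0 := by
  choose k c hcK hf using hfA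
  set G : Fin (q - 1) → Fin m → F[X] := fun j i =>
    ∑ l ∈ Finset.range (k j i + 1), C (c j i l * lam⁻¹ ^ l) * X ^ l
  have hfG : ∀ j i, f j i = expand F (q - 1) (G j i) := fun j i => by
    simp only [hf, G, map_sum, map_mul, map_pow, expand_C, expand_X, pow_mul]
  have hGsum : ∀ j, ∑ i, G j i * C (a i) = 0 := by
    refine eq_zero_of_sum_expand_mul_X_pow_eq_zero _ ?_
    simpa only [map_sum, map_mul, expand_C, ← hfG, Finset.sum_mul] using hsum
  intro j i
  rw [hfG, eq_zero_of_sum_mul_C_basis_eq_zero a lam⁻¹ (G j)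
    (fun i => coeff_sum_C_mul_pow_mul_X_pow lam⁻¹ (k j i) (hcK j i)) (hGsum j) i, map_zero]

/-- The elements a_i x^j (1 ≤ i ≤ m, 0 ≤ j ≤ q-2) are linearly independent
over the ring A = { Σ_l c_l λ^{-l} x^{(q-1)l} : c_l ∈ F_q } ⊆ F_{q^m}[x]. -/
theorem stmt_7 (p s m : ℕ) [Fact p.Prime] (hs : 0 < s) (hm : 0 < m)
    (F : Type*) [Field F] [Fintype F] [CharP F p]
    (q : ℕ) (hq : q = p ^ s) (hcard : Fintype.card F = q ^ m)
    (lam : F) (hlam : lam ≠ 0)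
    (Fq : Subfield F) (hFq : ∀ a : F, a ∈ Fq ↔ a ^ q = a)
    (a : Module.Basis (Fin m) Fq F)
    (f : Fin (q - 1) → Fin m → Polynomial F)
    (hfA : ∀ (j : Fin (q - 1)) (i : Fin m),
      ∃ (k : ℕ) (c : ℕ → F), (∀ l, c l ∈ Fq) ∧
        f j i = ∑ l ∈ Finset.range (k + 1),
          Polynomial.C (c l * lam⁻¹ ^ l) * Polynomial.X ^ ((q - 1) * l))
    (hsum : ∑ j : Fin (q - 1), ∑ i : Fin m,
      f j i * Polynomial.C (a i) * Polynomial.X ^ (j : ℕ) = 0) :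
    ∀ (j : Fin (q - 1)) (i : Fin m), f j i = 0 :=
  stmt_7_general m F q lam Fq a f hfA hsum
end

section
/- Let φ be a field automorphism of a field F with fixed field K, and let f_1,...,f_n be elements of F that are linearly independent over K. Then the n×n Moore matrix W with entries W_{ij} = φ^{i-1}(f_j) is invertible. -/
/-- If f_1,...,f_n ∈ F are linearly independent over the fixed field K of an
automorphism φ of F, then the Moore matrix (φ^{i-1}(f_j))_{i,j} is invertible. -/
theorem stmt_8 (F : Type*) [Field F] (e : F ≃+* F) (n : ℕ) (f : Fin n → F)
    (hf : LinearIndependent (fixedSubfield e) f) :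
    (Matrix.of fun i j : Fin n => (⇑e)^[(i : ℕ)] (f j)).det ≠ 0 := by
  induction n with
  | zero =>
    simp [Matrix.det_fin_zero]
  | succ n ih =>
    intro hdet
    obtain ⟨v, hv0, hv⟩ := Matrix.exists_mulVec_eq_zero_iff.2 hdet
    obtain ⟨j0, hj0⟩ : ∃ j0, v j0 ≠ 0 := by
      by_contra h; push_neg at h; exact hv0 (funext h)
    have heq : ∀ i : Fin (n+1), ∑ j, (⇑e)^[(i:ℕ)] (f j) * v j = 0 := by
      intro i
      have := congrFun hv i
      simpa [Matrix.mulVec, dotProduct, mul_comm] using this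
    -- the "derivative" coefficients
    set d : Fin (n+1) → F := fun j => v j0 * e (v j) - e (v j0) * v j with hd
    have hd0 : d j0 = 0 := by simp [hd]; ring
    have hder : ∀ i : Fin n, ∑ j, (⇑e)^[(i:ℕ)+1] (f j) * d j = 0 := by
      intro i
      have h1 : ∑ j, (⇑e)^[(i:ℕ)+1] (f j) * e (v j) = 0 := by
        have := congrArg e (heq ⟨i, by omega⟩)
        simpa [map_sum, map_mul, ← Function.iterate_succ_apply' e] using this
      have h2 : ∑ j, (⇑e)^[(i:ℕ)+1] (f j) * v j = 0 := heq ⟨(i:ℕ)+1, by omega⟩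
      calc ∑ j, (⇑e)^[(i:ℕ)+1] (f j) * d j
          = v j0 * (∑ j, (⇑e)^[(i:ℕ)+1] (f j) * e (v j))
            - e (v j0) * (∑ j, (⇑e)^[(i:ℕ)+1] (f j) * v j) := by
            simp [hd, Finset.mul_sum, ← Finset.sum_sub_distrib]; congr 1; funext j; ring
        _ = 0 := by rw [h1, h2]; ring
    -- shift down one level and remove column j0
    set w : Fin n → F := fun j => e.symm (d (j0.succAbove j)) with hw
    have hMw : Matrix.mulVec (Matrix.of fun i j : Fin n => (⇑e)^[(i : ℕ)] (f (j0.succAbove j))) w = 0 := by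
      funext i
      have h3 : ∑ j : Fin n, (⇑e)^[(i:ℕ)+1] (f (j0.succAbove j)) * d (j0.succAbove j) = 0 := by
        have := hder i
        rw [Fin.sum_univ_succAbove _ j0] at this
        simpa [hd0] using this
      have := congrArg e.symm h3
      simp only [map_sum, map_mul, map_zero] at this
      simp only [Matrix.mulVec, dotProduct, Matrix.of_apply, Pi.zero_apply, hw]
      rw [← this]
      congr 1; funext j
      congr 1
      rw [Function.iterate_succ_apply' e]
      exact (e.symm_apply_apply _).symm
    have hwz : w = 0 := by
      by_contra hwne
      exact ih (f ∘ j0.succAbove) (hf.comp _ (Fin.succAbove_right_injective))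
        (Matrix.exists_mulVec_eq_zero_iff.1 ⟨w, hwne, hMw⟩)
    have hdz : ∀ j, d j = 0 := by
      intro j
      rcases eq_or_ne j j0 with rfl | hne
      · exact hd0
      · obtain ⟨k, rfl⟩ := Fin.exists_succAbove_eq hne
        have : w k = 0 := congrFun hwz k
        rw [hw] at this
        simpa using (e.symm.injective (by simpa using this) : d (j0.succAbove k) = 0)
    -- coefficients are in the fixed field
    have hej0 : e (v j0) ≠ 0 := fun h => hj0 (e.injective (h.trans (map_zero e).symm))
    have hK : ∀ j, v j / v j0 ∈ fixedSubfield e := by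
      intro j
      have hdj : v j0 * e (v j) - e (v j0) * v j = 0 := hdz j
      show e (v j / v j0) = v j / v j0
      rw [map_div₀, div_eq_div_iff hej0 hj0]
      linear_combination hdj
    set g : Fin (n+1) → fixedSubfield e := fun j => ⟨v j / v j0, hK j⟩ with hg
    have hsum : ∑ j, g j • f j = 0 := by
      have h0 := heq 0
      simp only [Fin.val_zero, Function.iterate_zero, id_eq] at h0
      have : ∑ j, (v j / v j0) * f j = (∑ j, f j * v j) / v j0 := by
        rw [Finset.sum_div]; congr 1; funext j; ring
      calc ∑ j, g j • f j = ∑ j, (v j / v j0) * f j :=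
            Finset.sum_congr rfl (fun j _ => rfl)
        _ = 0 := by rw [this, h0, zero_div]
    have h1 := Fintype.linearIndependent_iff.1 hf g hsum j0
    have h2 : v j0 / v j0 = (0:F) := congrArg Subtype.val h1
    rw [div_self hj0] at h2
    exact one_ne_zero h2
end

section
/- Let φ be a field automorphism of a field F with fixed field K, and let L = f_0·id + f_1·φ + ... + f_k·φ^k be a nonzero linear operator on F with coefficients f_i ∈ F and f_k ≠ 0 (degree k). Then the kernel of L, as a K-vector subspace of F, has dimension at most k. -/
open Finset

theorem Finset.sum_range_succ_mul_eq_add_sum_tail_mul_sub {R : Type*} [CommRing R]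
    (c x : ℕ → R) (n : ℕ) :
    ∑ i ∈ range (n + 1), c i * x i =
      (∑ i ∈ range (n + 1), c i) * x 0 +
        ∑ j ∈ range n, (∑ i ∈ Ico (j + 1) (n + 1), c i) * (x (j + 1) - x j) := by
  induction n with
  | zero => simp
  | succ n ih =>
    have htail :
        ∑ j ∈ range (n + 1), (∑ i ∈ Ico (j + 1) (n + 1 + 1), c i) * (x (j + 1) - x j) =
          ∑ j ∈ range (n + 1), (∑ i ∈ Ico (j + 1) (n + 1), c i + c (n + 1)) * (x (j + 1) - x j) :=
      sum_congr rfl fun j hj => by rw [sum_Ico_succ_top (Nat.succ_le_of_lt (mem_range.mp hj))]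
    rw [htail, sum_range_succ (fun j => (_ + c (n + 1)) * _), Ico_self, sum_empty,
      sum_range_succ, sum_range_succ c, ih]
    simp only [add_mul, sum_add_distrib, ← mul_sum, sum_range_sub (fun j => x j)]
    ring

namespace LinearMap

universe u

variable {R P : Type*} {M N : Type u} [DivisionRing R] [AddCommGroup M] [Module R M]
  [AddCommGroup N] [Module R N] [AddCommGroup P] [Module R P]

theorem rank_ker_comp_le (f : N →ₗ[R] P) (g : M →ₗ[R] N) :
    Module.rank R (ker (f ∘ₗ g)) ≤ Module.rank R (ker f) + Module.rank R (ker g) := by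
  rw [ker_comp]
  simpa using lift_rank_comap_le (f := g) (ker f)

theorem rank_ker_le_rank_ker_comp_of_surjective (f : N →ₗ[R] P) {g : M →ₗ[R] N}
    (hg : Function.Surjective g) : Module.rank R (ker f) ≤ Module.rank R (ker (f ∘ₗ g)) := by
  have h := rank_map_le g ((ker f).comap g)
  rwa [Submodule.map_comap_eq_of_surjective hg, ← ker_comp] at h

end LinearMap

section

variable {F : Type*} [Field F] (e : F ≃+* F)

def fixedLinearMap : F →ₗ[fixedSubfield e] F where
  toFun := e
  map_add' := map_add e
  map_smul' c x := by
    change e (c * x) = c * e x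
    rw [map_mul, c.2]

theorem rank_ker_fixedLinearMap_sub_one_le :
    Module.rank (fixedSubfield e) (LinearMap.ker (fixedLinearMap e - 1)) ≤ 1 := by
  have hle : LinearMap.ker (fixedLinearMap e - 1) ≤ Submodule.span (fixedSubfield e) {1} := by
    intro x hx
    have hxK : x ∈ fixedSubfield e := sub_eq_zero.mp hx
    exact Submodule.mem_span_singleton.mpr ⟨⟨x, hxK⟩, mul_one x⟩
  calc _ ≤ Module.rank (fixedSubfield e) (Submodule.span (fixedSubfield e) ({1} : Set F)) :=
        Submodule.rank_mono hle
    _ ≤ 1 := by simpa using rank_span_le (R := fixedSubfield e) ({1} : Set F)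

noncomputable def diffOperator (f : ℕ → F) (k : ℕ) : F →ₗ[fixedSubfield e] F :=
  ∑ i ∈ range (k + 1), LinearMap.mulLeft (fixedSubfield e) (f i) ∘ₗ fixedLinearMap e ^ i

theorem diffOperator_apply (f : ℕ → F) (k : ℕ) (g : F) :
    diffOperator e f k g = ∑ i ∈ range (k + 1), f i * (⇑e)^[i] g := by
  simp only [diffOperator, LinearMap.sum_apply, LinearMap.comp_apply, LinearMap.mulLeft_apply,
    Module.End.pow_apply]
  rfl

theorem diffOperator_comp_mulLeft (f : ℕ → F) (k : ℕ) (g : F) :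
    diffOperator e f k ∘ₗ LinearMap.mulLeft (fixedSubfield e) g =
      diffOperator e (fun i => f i * (⇑e)^[i] g) k := by
  ext h
  simp only [LinearMap.comp_apply, LinearMap.mulLeft_apply, diffOperator_apply, iterate_map_mul,
    mul_assoc]

theorem diffOperator_eq_comp_sub_one (c : ℕ → F) (k : ℕ)
    (hc : ∑ i ∈ range (k + 2), c i = 0) :
    diffOperator e c (k + 1) =
      diffOperator e (fun j => ∑ i ∈ Ico (j + 1) (k + 2), c i) k ∘ₗ
        (fixedLinearMap e - 1) := by
  ext h
  rw [diffOperator_apply, sum_range_succ_mul_eq_add_sum_tail_mul_sub, hc, zero_mul, zero_add,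
    LinearMap.comp_apply, diffOperator_apply]
  refine sum_congr rfl fun j _ => ?_
  rw [Function.iterate_succ_apply, ← iterate_map_sub]
  rfl

theorem rank_ker_diffOperator_le (k : ℕ) (f : ℕ → F) (hf : f k ≠ 0) :
    Module.rank (fixedSubfield e) (LinearMap.ker (diffOperator e f k)) ≤ k := by
  induction k generalizing f with
  | zero =>
    have hbot : LinearMap.ker (diffOperator e f 0) = ⊥ := by
      rw [LinearMap.ker_eq_bot']
      intro g hg
      simpa [diffOperator_apply, hf] using hg
    simp [hbot]
  | succ k ih =>
    by_cases hbot : LinearMap.ker (diffOperator e f (k + 1)) = ⊥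
    · rw [hbot, rank_bot]
      exact zero_le
    obtain ⟨g, hg, hg0⟩ := Submodule.exists_mem_ne_zero_of_ne_bot hbot
    set c : ℕ → F := fun i => f i * (⇑e)^[i] g
    have hc : ∑ i ∈ range (k + 2), c i = 0 := by
      simpa [diffOperator_apply] using hg
    have hd : ∑ i ∈ Ico (k + 1) (k + 2), c i ≠ 0 := by
      rw [Nat.Ico_succ_singleton, sum_singleton]
      exact mul_ne_zero hf fun h => hg0 (e.injective.iterate _ (by rwa [iterate_map_zero]))
    have hsurj : Function.Surjective (LinearMap.mulLeft (fixedSubfield e) g) :=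
      fun y => ⟨g⁻¹ * y, by simp [hg0]⟩
    calc Module.rank (fixedSubfield e) (LinearMap.ker (diffOperator e f (k + 1)))
        ≤ Module.rank (fixedSubfield e) (LinearMap.ker
            (diffOperator e f (k + 1) ∘ₗ LinearMap.mulLeft (fixedSubfield e) g)) :=
          LinearMap.rank_ker_le_rank_ker_comp_of_surjective _ hsurj
      _ ≤ Module.rank (fixedSubfield e)
            (LinearMap.ker (diffOperator e (fun j => ∑ i ∈ Ico (j + 1) (k + 2), c i) k)) +
          Module.rank (fixedSubfield e) (LinearMap.ker (fixedLinearMap e - 1)) := by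
          rw [diffOperator_comp_mulLeft, diffOperator_eq_comp_sub_one e c k hc]
          exact LinearMap.rank_ker_comp_le _ _
      _ ≤ k + 1 := add_le_add (ih _ hd) (rank_ker_fixedLinearMap_sub_one_le e)
      _ = (k + 1 : ℕ) := by push_cast; rfl

end

/-- A nonzero operator L = Σ_{i=0}^k f_i φ^i of degree k (f_k ≠ 0) on F has
kernel of dimension at most k over the fixed field K of φ. -/
theorem stmt_10 (F : Type*) [Field F] (e : F ≃+* F) (k : ℕ) (f : ℕ → F)
    (hfk : f k ≠ 0)
    (L : F →ₗ[fixedSubfield e] F)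
    (hL : ∀ g : F, L g = ∑ i ∈ Finset.range (k + 1), f i * (⇑e)^[i] g) :
    Module.rank (fixedSubfield e) (LinearMap.ker L) ≤ (k : Cardinal) := by
  obtain rfl : L = diffOperator e f k := LinearMap.ext fun g => by rw [hL, diffOperator_apply]
  exact rank_ker_diffOperator_le e k f hfk
end

section
/- Let F/E be a field extension of finite degree m, and let C ⊆ F^n be an E-linear (or F-linear) code where the rank of a vector x = (x_1,...,x_n) is the dimension of the E-span of its coordinates. If C is an F-linear subspace of F^n of dimension k over F with minimum rank distance d, then d ≤ n - k + 1 (Singleton bound for the rank metric over arbitrary fields). -/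
/-- Singleton bound for the rank metric over an arbitrary field extension
F/E of finite degree m with n ≤ m: an F-linear [n,k,d] rank metric code satisfies
d ≤ n - k + 1. -/
theorem stmt_11 (E F : Type*) [Field E] [Field F] [Algebra E F]
    (m n k d : ℕ) (hm : Module.finrank E F = m) (hn : n ≤ m)
    (C : Submodule F (Fin n → F)) (hk : Module.finrank F C = k)
    (hmin : ∀ c ∈ C, c ≠ 0 →
      d ≤ Module.finrank E (Submodule.span E (Set.range c)))
    (hex : ∃ c ∈ C, c ≠ 0 ∧
      Module.finrank E (Submodule.span E (Set.range c)) = d) :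
    d ≤ n - k + 1 := by
  classical
  obtain ⟨c0, hc0, hc0ne, hc0d⟩ := hex
  have hkn : k ≤ n := by
    rw [← hk]
    calc Module.finrank F C ≤ Module.finrank F (Fin n → F) := Submodule.finrank_le C
      _ = n := by simp
  rcases Nat.eq_zero_or_pos k with hk0 | hkpos
  · exfalso
    have hbot : C = ⊥ := Submodule.finrank_eq_zero.mp (by rw [hk, hk0])
    rw [hbot, Submodule.mem_bot] at hc0
    exact hc0ne hc0
  set r := k - 1 with hr
  have hrn : r ≤ n := le_trans (Nat.sub_le _ _) hkn
  let f : C →ₗ[F] (Fin r → F) :=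
    { toFun := fun c i => (c : Fin n → F) (Fin.castLE hrn i)
      map_add' := by intros; rfl
      map_smul' := by intros; rfl }
  have hninj : ¬ Function.Injective f := by
    intro hinj
    have := LinearMap.finrank_le_finrank_of_injective hinj
    simp [hk] at this
    omega
  rw [← LinearMap.ker_eq_bot] at hninj
  obtain ⟨⟨x, hxC⟩, hxker, hxne⟩ := Submodule.exists_mem_ne_zero_of_ne_bot hninj
  have hxne' : x ≠ 0 := by
    intro h
    exact hxne (by simpa [Subtype.ext_iff] using h)
  have hvanish : ∀ j : Fin n, (j : ℕ) < r → x j = 0 := by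
    intro j hj
    have := congrFun hxker ⟨(j : ℕ), hj⟩
    simpa [f, Fin.castLE] using this
  -- the nonzero coordinates are among the last n - r ones
  let g : Fin (n - r) → F := fun i => x ⟨r + (i : ℕ), by omega⟩
  have hsub : Set.range x ⊆ insert (0 : F) (Set.range g) := by
    rintro _ ⟨j, rfl⟩
    by_cases hj : (j : ℕ) < r
    · left; exact hvanish j hj
    · right
      refine ⟨⟨(j : ℕ) - r, by omega⟩, ?_⟩
      simp only [g]
      congr 1
      ext
      simp
      omega
  have hspan : Submodule.span E (Set.range x) ≤ Submodule.span E (Set.range g) := by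
    calc Submodule.span E (Set.range x)
        ≤ Submodule.span E (insert (0 : F) (Set.range g)) := Submodule.span_mono hsub
      _ = Submodule.span E (Set.range g) := Submodule.span_insert_zero
  have hfin : Module.finrank E (Submodule.span E (Set.range x)) ≤ n - r := by
    have h1 : Module.finrank E (Submodule.span E (Set.range x))
        ≤ Module.finrank E (Submodule.span E (Set.range g)) := by
      have : FiniteDimensional E (Submodule.span E (Set.range g)) :=
        FiniteDimensional.span_of_finite E (Set.finite_range g)
      exact Submodule.finrank_mono hspan
    have h2 : Module.finrank E (Submodule.span E (Set.range g)) ≤ n - r := by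
      have := finrank_span_le_card (R := E) (Set.range g)
      refine le_trans this ?_
      rw [Set.toFinset_range]
      exact le_trans (Finset.card_image_le) (by simp)
    exact le_trans h1 h2
  have hd := hmin x hxC hxne'
  omega
end

section
/- Let F/E be a finite degree field extension, k ≤ n, and G ∈ F^{k×n} a generator matrix of an F-linear rank metric code C (with rank metric defined via the extension F/E). If C is a maximum rank distance code (minimum rank distance n-k+1), then for every n×k matrix M over E of rank k, the k×k matrix GM is invertible. -/
/-! If `GM` were singular, some `x ≠ 0` would have codeword `y = xG` with `y M = 0`. The `k`
independent columns of `M` then lie in the kernel of `E^n → F, v ↦ ∑ vᵢ yᵢ`, whose image is the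
`E`-span of the coordinates of `y`; by rank–nullity `rank y ≤ n - k`, contradicting the MRD bound. -/

section

open Module Matrix Submodule

variable {E F ι κ : Type*} [Field E] [Ring F] [Algebra E F] [Fintype ι]

theorem Fintype.linearCombination_col_apply (y : ι → F) (M : Matrix ι κ E) (j : κ) :
    Fintype.linearCombination E y (M.col j) = (y ᵥ* M.map (algebraMap E F)) j := by
  simp only [Fintype.linearCombination_apply, vecMul, dotProduct, map_apply, col_apply,
    Algebra.smul_def, Algebra.commutes]

theorem Matrix.finrank_span_range_add_rank_le_of_vecMul_map_eq_zero [Fintype κ] {y : ι → F}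
    {M : Matrix ι κ E} (h : y ᵥ* M.map (algebraMap E F) = 0) :
    finrank E (span E (Set.range y)) + M.rank ≤ Fintype.card ι := by
  set L := Fintype.linearCombination E y
  have hcols : span E (Set.range M.col) ≤ LinearMap.ker L := by
    rw [span_le]
    rintro _ ⟨j, rfl⟩
    simp [L, Fintype.linearCombination_col_apply, h]
  calc finrank E (span E (Set.range y)) + M.rank
      ≤ finrank E (LinearMap.range L) + finrank E (LinearMap.ker L) := by
        rw [Fintype.range_linearCombination, rank_eq_finrank_span_cols]
        exact Nat.add_le_add_left (finrank_mono hcols) _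
    _ = Fintype.card ι := by rw [L.finrank_range_add_finrank_ker, finrank_fintype_fun_eq_card]

end

theorem stmt_12_general (E F : Type*) [Field E] [Field F] [Algebra E F]
    (n k : ℕ)
    (G : Matrix (Fin k) (Fin n) F)
    (hMRD : ∀ x : Fin k → F, x ≠ 0 →
      n - k + 1 ≤ Module.finrank E (Submodule.span E (Set.range (Matrix.vecMul x G))))
    (M : Matrix (Fin n) (Fin k) E) (hM : M.rank = k) :
    (G * M.map (algebraMap E F)).det ≠ 0 := by
  intro hdet
  obtain ⟨x, hx0, hxGM⟩ := Matrix.exists_vecMul_eq_zero_iff.mpr hdet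
  have hkernel : Matrix.vecMul (Matrix.vecMul x G) (M.map (algebraMap E F)) = 0 := by
    rw [Matrix.vecMul_vecMul, hxGM]
  have hrank := Matrix.finrank_span_range_add_rank_le_of_vecMul_map_eq_zero hkernel
  rw [hM, Fintype.card_fin] at hrank
  have hbound := hMRD x hx0
  omega

/-- If the code generated by G ∈ F^{k×n} is MRD (every nonzero codeword has
rank ≥ n-k+1 over E), then for every n×k matrix M over E of rank k, GM is invertible. -/
theorem stmt_12 (E F : Type*) [Field E] [Field F] [Algebra E F]
    (m n k : ℕ) (hm : Module.finrank E F = m) (hkn : k ≤ n) (hn : n ≤ m)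
    (G : Matrix (Fin k) (Fin n) F) (hG : G.rank = k)
    (hMRD : ∀ x : Fin k → F, x ≠ 0 →
      n - k + 1 ≤ Module.finrank E (Submodule.span E (Set.range (Matrix.vecMul x G))))
    (M : Matrix (Fin n) (Fin k) E) (hM : M.rank = k) :
    (G * M.map (algebraMap E F)).det ≠ 0 :=
  stmt_12_general E F n k G hMRD M hM
end

section
/- Let F/E be a finite degree field extension, k ≤ n, and G ∈ F^{k×n} of rank k. If for every n×k matrix M over E of rank k the matrix GM is invertible, then the code C = {xG : x ∈ F^k} is a maximum rank distance code: every nonzero codeword has rank at least n-k+1 with respect to E. -/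
/-!
If a codeword `c = x G` had `E`-rank at most `n - k`, the `E`-linear relations among its
coordinates would supply a rank-`k` matrix `M` over `E` with `c M = 0`, that is `x (G M) = 0`
with `x ≠ 0`, so `G M` would be singular.
-/

open Matrix

section

variable {E F : Type*} [Field E] [Field F] [Algebra E F] {ι κ : Type*} [Fintype ι]

theorem vecMul_map_algebraMap_apply (c : ι → F) (M : Matrix ι κ E) (j : κ) :
    (c ᵥ* M.map (algebraMap E F)) j = Fintype.linearCombination E c (fun i => M i j) := by
  simp only [vecMul, dotProduct, map_apply, Fintype.linearCombination_apply, Algebra.smul_def,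
    mul_comm]

theorem exists_rank_eq_vecMul_map_eq_zero (c : ι → F) (k : ℕ)
    (hc : Module.finrank E (Submodule.span E (Set.range c)) + k ≤ Fintype.card ι) :
    ∃ M : Matrix ι (Fin k) E, M.rank = k ∧ c ᵥ* M.map (algebraMap E F) = 0 := by
  set φ := Fintype.linearCombination E c
  have hker : k ≤ Module.finrank E (LinearMap.ker φ) := by
    have := φ.finrank_range_add_finrank_ker
    rw [Fintype.range_linearCombination, Module.finrank_fintype_fun_eq_card] at this
    omega
  obtain ⟨f, hf⟩ := exists_linearIndependent_of_le_finrank hker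
  refine ⟨of fun i j => (f j : ι → E) i, ?_, funext fun j => ?_⟩
  · rw [rank_eq_finrank_span_cols]
    exact (finrank_span_eq_card (hf.map' _ (Submodule.ker_subtype _))).trans (Fintype.card_fin k)
  · exact (vecMul_map_algebraMap_apply c _ j).trans (f j).2

end

theorem stmt_13_general (E F : Type*) [Field E] [Field F] [Algebra E F]
    (n k : ℕ) (hkn : k ≤ n)
    (G : Matrix (Fin k) (Fin n) F)
    (hinv : ∀ M : Matrix (Fin n) (Fin k) E, M.rank = k →
      (G * M.map (algebraMap E F)).det ≠ 0) :
    ∀ x : Fin k → F, x ≠ 0 →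
      n - k + 1 ≤ Module.finrank E (Submodule.span E (Set.range (Matrix.vecMul x G))) := by
  intro x hx
  by_contra! hrank
  obtain ⟨M, hM, hxGM⟩ := exists_rank_eq_vecMul_map_eq_zero (E := E) (x ᵥ* G) k
    (by rw [Fintype.card_fin]; omega)
  exact hinv M hM (exists_vecMul_eq_zero_iff.mp ⟨x, hx, by rwa [← vecMul_vecMul]⟩)

/-- If G ∈ F^{k×n} has rank k and GM is invertible for every n×k matrix M
over E of rank k, then the code {xG : x ∈ F^k} is MRD: every nonzero codeword has rank
at least n-k+1 with respect to E. -/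
theorem stmt_13 (E F : Type*) [Field E] [Field F] [Algebra E F]
    (m n k : ℕ) (hm : Module.finrank E F = m) (hkn : k ≤ n) (hn : n ≤ m)
    (G : Matrix (Fin k) (Fin n) F) (hG : G.rank = k)
    (hinv : ∀ M : Matrix (Fin n) (Fin k) E, M.rank = k →
      (G * M.map (algebraMap E F)).det ≠ 0) :
    ∀ x : Fin k → F, x ≠ 0 →
      n - k + 1 ≤ Module.finrank E (Submodule.span E (Set.range (Matrix.vecMul x G))) :=
  stmt_13_general E F n k hkn G hinv
end

section
/- Let φ be a field automorphism of a field F with fixed field K, let k ≤ n ≤ [F:K], and let f_1,...,f_n ∈ F be linearly independent over K. Let L_k be the F-space of operators L = Σ_{i=0}^{k-1} g_i φ^i (g_i ∈ F), and define Ev(L) = (L(f_1),...,L(f_n)) ∈ F^n. Then C = Ev(L_k) is an F-linear subspace of F^n of dimension k over F, and every nonzero codeword of C has rank (K-dimension of the K-span of its coordinates) at least n - k + 1; i.e., C is an MRD code with minimum rank distance exactly n - k + 1. -/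
/-!
A nonzero operator `L = ∑_{i<k} g i • φ^i` cannot vanish on `k` elements `x_j` that are
independent over the fixed field `K`: that would make the Moore matrix `(φ^i (x_j))` singular,
while Artin's argument (compare a shortest dependence between its columns, normalised at one
coefficient, with its image under `φ`) shows that its columns are independent. So `L` has
kernel of dimension `< k` on the `n`-dimensional `K`-span of the `f_j`, and rank–nullity gives
rank `≥ n - k + 1`. The bound is attained by an `L ≠ 0` vanishing at `f_1, …, f_{k-1}`, which
exists because `k - 1` linear conditions on `k` coefficients have a nonzero solution.
-/

open Module Submodule Set

theorem finrank_span_range_comp_add_finrank_inf_ker {K M N : Type*} [DivisionRing K]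
    [AddCommGroup M] [Module K M] [AddCommGroup N] [Module K N] (T : M →ₗ[K] N)
    {ι : Type*} [Fintype ι] {f : ι → M} (hf : LinearIndependent K f) :
    finrank K (span K (range (T ∘ f))) + finrank K ↥(span K (range f) ⊓ LinearMap.ker T) =
      Fintype.card ι := by
  have := FiniteDimensional.span_of_finite K (finite_range f)
  have := (T.domRestrict (span K (range f))).finrank_range_add_finrank_ker
  rwa [LinearMap.range_domRestrict, map_span, ← range_comp, LinearMap.ker_domRestrict,
    ← finrank_map_subtype_eq, map_comap_subtype, finrank_span_eq_card hf] at this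

theorem finrank_span_range_comp_add_le {K M N : Type*} [DivisionRing K]
    [AddCommGroup M] [Module K M] [AddCommGroup N] [Module K N] (T : M →ₗ[K] N) {n m : ℕ}
    {f : Fin n → M} (hf : LinearIndependent K f) (hmn : m ≤ n)
    (hT : ∀ j : Fin m, T (f (Fin.castLE hmn j)) = 0) :
    finrank K (span K (range (T ∘ f))) + m ≤ n := by
  have := FiniteDimensional.span_of_finite K (finite_range f)
  have hsub : span K (range (f ∘ Fin.castLE hmn)) ≤ span K (range f) ⊓ LinearMap.ker T :=
    span_le.mpr <| range_subset_iff.mpr fun j =>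
      mem_inf.mpr ⟨subset_span (mem_range_self _), LinearMap.mem_ker.mpr (hT j)⟩
  have hle := Submodule.finrank_mono hsub
  rw [finrank_span_eq_card (hf.comp _ (Fin.castLE_injective hmn)), Fintype.card_fin] at hle
  have := finrank_span_range_comp_add_finrank_inf_ker T hf
  rw [Fintype.card_fin] at this
  omega

theorem exists_ne_zero_forall_apply_castLE_eq_zero {K : Type*} [Field K] {k n m : ℕ}
    (A : (Fin k → K) →ₗ[K] (Fin n → K)) (hmk : m < k) (hmn : m ≤ n) :
    ∃ g ≠ 0, ∀ j : Fin m, A g (Fin.castLE hmn j) = 0 := by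
  obtain ⟨g, hg, hg0⟩ := (Submodule.ne_bot_iff _).mp
    (LinearMap.ker_ne_bot_of_finrank_lt (f := LinearMap.funLeft K K (Fin.castLE hmn) ∘ₗ A)
      (by simpa using hmk))
  exact ⟨g, hg0, fun j => congrFun (LinearMap.mem_ker.mp hg) j⟩

section FixedSubfield

variable {F : Type*} [Field F] (e : F ≃+* F)

def fixedSubfieldLinearEquiv : F ≃ₗ[fixedSubfield e] F where
  __ := e
  map_smul' a x := by
    change e (a * x) = a * e x
    rw [map_mul, a.2]

@[simp]
lemma coe_fixedSubfieldLinearEquiv : ⇑(fixedSubfieldLinearEquiv e) = e := rfl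

def skewOperator {k : ℕ} (g : Fin k → F) : F →ₗ[fixedSubfield e] F :=
  ∑ i, g i • ((fixedSubfieldLinearEquiv e : F →ₗ[fixedSubfield e] F) ^ (i : ℕ))

lemma skewOperator_apply {k : ℕ} (g : Fin k → F) (x : F) :
    skewOperator e g x = ∑ i, g i * (⇑e)^[i] x := by
  simp [skewOperator, Module.End.pow_apply]

def mooreMatrix {k : ℕ} (x : Fin k → F) : Matrix (Fin k) (Fin k) F :=
  Matrix.of fun i j => (⇑e)^[i] (x j)

variable {e}

theorem eq_zero_of_sum_mul_iterate_eq_zero {ι : Type*} [Fintype ι] (m : ℕ) {x : ι → F}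
    (hx : LinearIndependent (fixedSubfield e) x) {s : Finset ι} (hs : s.card ≤ m) {c : ι → F}
    (hcs : ∀ j ∉ s, c j = 0) (hc : ∀ i < m, ∑ j, c j * (⇑e)^[i] (x j) = 0) : c = 0 := by
  classical
  induction m generalizing x s c with
  | zero =>
    obtain rfl : s = ∅ := Finset.card_eq_zero.mp (Nat.le_zero.mp hs)
    exact funext fun j => hcs j (Finset.notMem_empty j)
  | succ m ih =>
    by_contra hc0
    obtain ⟨j₀, hj₀⟩ : ∃ j, c j ≠ 0 := Function.ne_iff.mp hc0
    -- `d` vanishes at `j₀` and solves the system for `e ∘ x` with one equation fewer.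
    set d : ι → F := fun j => c j₀ * e (c j) - e (c j₀) * c j
    have hd : d = 0 := by
      refine ih (hx.map' _ (fixedSubfieldLinearEquiv e).ker) (s := s.erase j₀) ?_ ?_
        fun i hi => ?_
      · have hj₀s : j₀ ∈ s := by_contra fun h => hj₀ (hcs _ h)
        exact Nat.le_of_lt_succ ((Finset.card_erase_lt_of_mem hj₀s).trans_le hs)
      · intro j hj
        rcases eq_or_ne j j₀ with rfl | hne
        · simp only [d, mul_comm, sub_self]
        · simp [d, hcs j (fun h => hj (Finset.mem_erase.mpr ⟨hne, h⟩))]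
      · calc ∑ j, d j * (⇑e)^[i] (fixedSubfieldLinearEquiv e (x j))
            = c j₀ * e (∑ j, c j * (⇑e)^[i] (x j))
                - e (c j₀) * ∑ j, c j * (⇑e)^[i + 1] (x j) := by
              simp only [map_sum, map_mul, Finset.mul_sum, ← Finset.sum_sub_distrib, d,
                coe_fixedSubfieldLinearEquiv, ← Function.iterate_succ_apply,
                Function.iterate_succ_apply' e]
              exact Finset.sum_congr rfl fun j _ => by ring
          _ = 0 := by rw [hc i (by omega), hc (i + 1) (by omega)]; simp
    have hfixed : ∀ j, c j / c j₀ ∈ fixedSubfield e := fun j => by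
      have hdj := congrFun hd j
      simp only [d, Pi.zero_apply, sub_eq_zero] at hdj
      change e (c j / c j₀) = c j / c j₀
      rw [map_div₀, div_eq_div_iff ((map_ne_zero e).mpr hj₀) hj₀]
      linear_combination hdj
    have := Fintype.linearIndependent_iff.mp hx (fun j => ⟨c j / c j₀, hfixed j⟩) ?_ j₀
    · exact hj₀ (by simpa [div_self hj₀] using congrArg Subtype.val this)
    · simpa [div_mul_eq_mul_div, ← Finset.sum_div, Subfield.smul_def] using
        congrArg (· / c j₀) (hc 0 (Nat.succ_pos m))

theorem det_mooreMatrix_ne_zero {k : ℕ} {x : Fin k → F}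
    (hx : LinearIndependent (fixedSubfield e) x) : (mooreMatrix e x).det ≠ 0 := by
  rw [Ne, ← Matrix.exists_mulVec_eq_zero_iff]
  rintro ⟨c, hc0, hc⟩
  refine hc0 (eq_zero_of_sum_mul_iterate_eq_zero k hx (s := Finset.univ) (by simp) (by simp)
    fun i hi => ?_)
  simpa [mooreMatrix, Matrix.mulVec, dotProduct, mul_comm] using congrFun hc ⟨i, hi⟩

theorem eq_zero_of_forall_skewOperator_apply_eq_zero {k : ℕ} {x : Fin k → F}
    (hx : LinearIndependent (fixedSubfield e) x) {g : Fin k → F}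
    (hg : ∀ j, skewOperator e g (x j) = 0) : g = 0 := by
  by_contra hg0
  refine det_mooreMatrix_ne_zero hx
    (Matrix.exists_vecMul_eq_zero_iff.mp ⟨g, hg0, funext fun j => ?_⟩)
  simpa [mooreMatrix, Matrix.vecMul, dotProduct, skewOperator_apply] using hg j

theorem finrank_lt_of_le_ker_skewOperator {k : ℕ} {g : Fin k → F} (hg : g ≠ 0)
    {W : Submodule (fixedSubfield e) F} [FiniteDimensional (fixedSubfield e) W]
    (hW : W ≤ LinearMap.ker (skewOperator e g)) : finrank (fixedSubfield e) W < k := by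
  by_contra! hk
  obtain ⟨x, hx⟩ := exists_linearIndependent_of_le_finrank hk
  exact hg (eq_zero_of_forall_skewOperator_apply_eq_zero (hx.map' W.subtype W.ker_subtype)
    fun j => hW (x j).2)

theorem card_lt_finrank_span_range_skewOperator_comp_add {ι : Type*} [Fintype ι] {f : ι → F}
    (hf : LinearIndependent (fixedSubfield e) f) {k : ℕ} {g : Fin k → F} (hg : g ≠ 0) :
    Fintype.card ι <
      finrank (fixedSubfield e) (span (fixedSubfield e) (range (skewOperator e g ∘ f))) + k := by
  have := FiniteDimensional.span_of_finite (fixedSubfield e) (finite_range f)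
  have := finrank_span_range_comp_add_finrank_inf_ker (skewOperator e g) hf
  have := finrank_lt_of_le_ker_skewOperator hg
    (inf_le_right (a := span (fixedSubfield e) (range f)))
  omega

end FixedSubfield

theorem stmt_15_general (F : Type*) [Field F] (e : F ≃+* F)
    (n k : ℕ) (hk : 0 < k) (hkn : k ≤ n)
    (f : Fin n → F) (hf : LinearIndependent (fixedSubfield e) f)
    (Ev : (Fin k → F) →ₗ[F] (Fin n → F))
    (hEv : ∀ (g : Fin k → F) (j : Fin n),
      Ev g j = ∑ i : Fin k, g i * (⇑e)^[(i : ℕ)] (f j)) :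
    Module.finrank F (LinearMap.range Ev) = k ∧
    (∀ c ∈ LinearMap.range Ev, c ≠ 0 →
      n - k + 1 ≤ Module.finrank (fixedSubfield e)
        (Submodule.span (fixedSubfield e) (Set.range c))) ∧
    (∃ c ∈ LinearMap.range Ev, c ≠ 0 ∧
      Module.finrank (fixedSubfield e)
        (Submodule.span (fixedSubfield e) (Set.range c)) = n - k + 1) := by
  have hEv_eq (g : Fin k → F) : Ev g = skewOperator e g ∘ f :=
    funext fun j => by rw [hEv, Function.comp_apply, skewOperator_apply]
  have hinj : Function.Injective Ev := by
    rw [← LinearMap.ker_eq_bot, LinearMap.ker_eq_bot']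
    exact fun g hg => eq_zero_of_forall_skewOperator_apply_eq_zero
      (hf.comp _ (Fin.castLE_injective hkn)) fun j => by
        simpa [hEv_eq] using congrFun hg (Fin.castLE hkn j)
  have hlower {g : Fin k → F} (hg : g ≠ 0) :
      n < finrank (fixedSubfield e) (span (fixedSubfield e) (range (Ev g))) + k :=
    hEv_eq g ▸ (Fintype.card_fin n).symm.trans_lt
      (card_lt_finrank_span_range_skewOperator_comp_add hf hg)
  refine ⟨?_, ?_, ?_⟩
  · rw [LinearMap.finrank_range_of_inj hinj, finrank_fin_fun]
  · rintro _ ⟨g, rfl⟩ hc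
    have := hlower (g := g) (by rintro rfl; exact hc (map_zero Ev))
    omega
  · have hkn' : k - 1 ≤ n := by omega
    obtain ⟨g, hg, hvanish⟩ := exists_ne_zero_forall_apply_castLE_eq_zero Ev (by omega) hkn'
    have hupper := finrank_span_range_comp_add_le (skewOperator e g) hf hkn' fun j => by
      simpa [hEv_eq] using hvanish j
    refine ⟨Ev g, ⟨g, rfl⟩, fun h => hg (hinj (h.trans (map_zero Ev).symm)), ?_⟩
    have := hlower hg
    rw [← hEv_eq] at hupper
    omega

/-- Evaluation of operators Σ_{i<k} g_i φ^i at K-linearly independent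
f_1,...,f_n gives an F-linear MRD code of dimension k and minimum rank distance n-k+1. -/
theorem stmt_15 (F : Type*) [Field F] (e : F ≃+* F)
    (n k : ℕ) (hk : 0 < k) (hkn : k ≤ n)
    (hn : (n : Cardinal) ≤ Module.rank (fixedSubfield e) F)
    (f : Fin n → F) (hf : LinearIndependent (fixedSubfield e) f)
    (Ev : (Fin k → F) →ₗ[F] (Fin n → F))
    (hEv : ∀ (g : Fin k → F) (j : Fin n),
      Ev g j = ∑ i : Fin k, g i * (⇑e)^[(i : ℕ)] (f j)) :
    Module.finrank F (LinearMap.range Ev) = k ∧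
    (∀ c ∈ LinearMap.range Ev, c ≠ 0 →
      n - k + 1 ≤ Module.finrank (fixedSubfield e)
        (Submodule.span (fixedSubfield e) (Set.range c))) ∧
    (∃ c ∈ LinearMap.range Ev, c ≠ 0 ∧
      Module.finrank (fixedSubfield e)
        (Submodule.span (fixedSubfield e) (Set.range c)) = n - k + 1) :=
  stmt_15_general F e n k hk hkn f hf Ev hEv
end

section
/- Let G ∈ F_{q^m}[x]^{k×n} be a matrix such that, viewing its entries in F_{q^m}(x), G generates an MRD code over F_{q^m}(x)/K. Let f(x) ∈ F_{q^m}[x] be irreducible of degree r, and let Ḡ be G with entries reduced modulo f(x), viewed over F_{q^{mr}} ≅ F_{q^m}[x]/(f(x)). Then Ḡ generates an MRD code over F_{q^{mr}}/F_q if and only if det(GM) ≢ 0 mod f(x) for every n×k matrix M over F_q in column reduced echelon form of rank k. -/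
/-- A subfield of `F` acts on `AdjoinRoot f`. -/
noncomputable instance subfieldAlgebraAdjoinRoot {F : Type*} [Field F] (s : Subfield F)
    (f : Polynomial F) : Algebra s (AdjoinRoot f) :=
  ((algebraMap F (AdjoinRoot f)).comp s.subtype).toAlgebra

/-- An n×k matrix is in column reduced echelon form with k pivots. -/
def IsCREF {F : Type*} [Field F] {n k : ℕ} (M : Matrix (Fin n) (Fin k) F) : Prop :=
  ∃ piv : Fin k → Fin n, StrictMono piv ∧
    (∀ j, M (piv j) j = 1) ∧
    (∀ (j : Fin k) (i : Fin n), (i : ℕ) < (piv j : ℕ) → M i j = 0) ∧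
    (∀ j j', j' ≠ j → M (piv j) j' = 0)

/-!
A nonzero codeword `x Ḡ` has rank weight `n - k` or less iff, by rank–nullity, the space of
`F_q`-linear relations among its entries has dimension at least `k`. Such a space contains the
columns of a column reduced echelon matrix `M` (pivots at leading positions, the other pivot
entries cleared by a unitriangular change of basis), and the columns of such an `M` are always
independent. Finally, the columns of `M` are relations among the entries of `x Ḡ` exactly when
`x (Ḡ M) = 0`; such an `x ≠ 0` exists iff `det (Ḡ M) = 0`, i.e. iff `f ∣ det (G M)`.
-/

open Module Submodule Matrix

namespace IsCREF

variable {K : Type*} [Field K] {n k : ℕ} {N : Matrix (Fin n) (Fin k) K}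

theorem linearIndependent_transpose (hN : IsCREF N) : LinearIndependent K Nᵀ := by
  obtain ⟨piv, -, hone, -, hzero⟩ := hN
  refine Fintype.linearIndependent_iff.mpr fun a ha j => ?_
  have h := congrFun ha (piv j)
  simp only [Finset.sum_apply, Pi.smul_apply, transpose_apply, smul_eq_mul,
    Pi.zero_apply] at h
  rwa [Finset.sum_eq_single j (fun j' _ hj' => by rw [hzero j j' hj', mul_zero])
    (by simp), hone, mul_one] at h

theorem map_iff {L : Type*} [Field L] (φ : K →+* L) : IsCREF (N.map φ) ↔ IsCREF N := by
  simp only [IsCREF, map_apply, map_eq_one_iff φ φ.injective, map_eq_zero_iff φ φ.injective]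

end IsCREF

namespace Matrix

variable {K : Type*} [Field K] {n k : ℕ}

theorem isCREF_mul_inv_submatrix {U : Matrix (Fin n) (Fin k) K} {piv : Fin k → Fin n}
    (hpiv : StrictMono piv) (hone : ∀ j, U (piv j) j = 1)
    (hzero : ∀ j, ∀ i < piv j, U i j = 0) :
    IsCREF (U * (U.submatrix piv id)⁻¹) := by
  set A := U.submatrix piv id
  have hA : A.IsLowerTriangular := fun j j' hjj' => hzero j' (piv j) (hpiv hjj')
  have hdet : IsUnit A.det := by
    rw [det_of_isLowerTriangular A hA]
    simp [A, hone]
  have : Invertible A := A.invertibleOfIsUnitDet hdet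
  have hAinv : A⁻¹.IsLowerTriangular := blockTriangular_inv_of_blockTriangular hA
  have hpivot : (U * A⁻¹).submatrix piv id = 1 := by
    rw [submatrix_mul _ _ _ id _ Function.bijective_id, submatrix_id_id,
      mul_nonsing_inv A hdet]
  refine ⟨piv, hpiv, fun j => by simpa using congrFun₂ hpivot j j, fun j i hi => ?_,
    fun j j' hj => by simpa [one_apply_ne' hj] using congrFun₂ hpivot j j'⟩
  rw [mul_apply]
  refine Finset.sum_eq_zero fun j' _ => ?_
  rcases lt_or_ge j' j with h | h
  · rw [hAinv h, mul_zero]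
  · rw [hzero j' i (hi.trans_le (hpiv.monotone h)), zero_mul]

theorem transpose_mul_apply_mem {W : Submodule K (Fin n → K)} {k' : ℕ}
    {U : Matrix (Fin n) (Fin k) K} (hU : ∀ j, Uᵀ j ∈ W) (B : Matrix (Fin k) (Fin k') K)
    (j : Fin k') : (U * B)ᵀ j ∈ W := by
  have hcol : (U * B)ᵀ j = ∑ j', B j' j • Uᵀ j' := by
    ext i
    simp [mul_apply, Finset.sum_apply, mul_comm]
  rw [hcol]
  exact W.sum_mem fun j' _ => W.smul_mem _ (hU j')

theorem forall_mem_subfield_iff {F : Type*} [Field F] (S : Subfield F) {m n : Type*}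
    {P : Matrix m n F → Prop} :
    (∀ M : Matrix m n F, (∀ i j, M i j ∈ S) → P M) ↔ ∀ N : Matrix m n S, P (N.map S.subtype) :=
  ⟨fun h N => h _ fun i j => (N i j).2, fun h M hM => h (of fun i j => ⟨M i j, hM i j⟩)⟩

end Matrix

namespace Submodule

variable {K : Type*} [Field K] {n k : ℕ}

open Classical in
noncomputable def leadingIndices (W : Submodule K (Fin n → K)) : Finset (Fin n) :=
  {c | ∃ w ∈ W, w c ≠ 0 ∧ ∀ i < c, w i = 0}

theorem mem_leadingIndices {W : Submodule K (Fin n → K)} {c : Fin n} :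
    c ∈ W.leadingIndices ↔ ∃ w ∈ W, w c ≠ 0 ∧ ∀ i < c, w i = 0 := by
  simp [leadingIndices]

theorem finrank_le_card_leadingIndices (W : Submodule K (Fin n → K)) :
    finrank K W ≤ W.leadingIndices.card := by
  let restrict := (LinearMap.funLeft K K ((↑) : W.leadingIndices → Fin n)).comp W.subtype
  have hinj : Function.Injective restrict := by
    rw [← LinearMap.ker_eq_bot, eq_bot_iff]
    rintro ⟨w, hw⟩ hker
    rw [mem_bot]
    by_contra hw0
    obtain ⟨c, hc, hmin⟩ := wellFounded_lt.has_min {i | w i ≠ 0}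
      (Function.ne_iff.mp fun h => hw0 (Subtype.ext h))
    have hlead : c ∈ W.leadingIndices :=
      mem_leadingIndices.mpr ⟨w, hw, hc, fun i hi => not_not.mp fun h => hmin i h hi⟩
    exact hc (congrFun (LinearMap.mem_ker.mp hker) ⟨c, hlead⟩)
  simpa using LinearMap.finrank_le_finrank_of_injective hinj

theorem exists_strictMono_pivots {W : Submodule K (Fin n → K)} (hk : k ≤ finrank K W) :
    ∃ piv : Fin k → Fin n, StrictMono piv ∧
      ∀ j, ∃ w ∈ W, w (piv j) = 1 ∧ ∀ i < piv j, w i = 0 := by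
  obtain ⟨S, hS, hSk⟩ :=
    Finset.exists_subset_card_eq (hk.trans W.finrank_le_card_leadingIndices)
  refine ⟨S.orderEmbOfFin hSk, (S.orderEmbOfFin hSk).strictMono, fun j => ?_⟩
  obtain ⟨w, hw, hne, hzero⟩ := mem_leadingIndices.mp (hS (S.orderEmbOfFin_mem hSk j))
  exact ⟨(w (S.orderEmbOfFin hSk j))⁻¹ • w, W.smul_mem _ hw, inv_mul_cancel₀ hne,
    fun i hi => by simp [hzero i hi]⟩

theorem exists_isCREF_transpose_mem {W : Submodule K (Fin n → K)} (hk : k ≤ finrank K W) :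
    ∃ N : Matrix (Fin n) (Fin k) K, IsCREF N ∧ ∀ j, Nᵀ j ∈ W := by
  obtain ⟨piv, hpiv, hw⟩ := exists_strictMono_pivots hk
  choose w hwW hone hzero using hw
  exact ⟨_, isCREF_mul_inv_submatrix (U := of fun i j => w j i) hpiv hone hzero,
    transpose_mul_apply_mem hwW _⟩

theorem finrank_lt_iff_forall_isCREF (W : Submodule K (Fin n → K)) :
    finrank K W < k ↔ ∀ N : Matrix (Fin n) (Fin k) K, IsCREF N → ¬ ∀ j, Nᵀ j ∈ W := by
  refine ⟨fun hW N hN hNW => hW.not_ge ?_, fun h => not_le.mp fun hk => ?_⟩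
  · have hli : LinearIndependent K fun j => (⟨Nᵀ j, hNW j⟩ : W) :=
      .of_comp W.subtype hN.linearIndependent_transpose
    simpa using hli.fintype_card_le_finrank
  · obtain ⟨N, hN, hNW⟩ := exists_isCREF_transpose_mem hk
    exact h N hN hNW

end Submodule

section MRD

variable {F L : Type*} [Field F] [Field L] [Algebra F L] (K : Subfield F) {n k : ℕ}

/-- The rows of `A` generate an MRD code for the rank metric over `K`: the rank weight of a
codeword, the dimension of the `K`-span of its entries, is never below the Singleton bound. -/
def IsMRD (A : Matrix (Fin k) (Fin n) L) : Prop :=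
  ∀ x : Fin k → L, x ≠ 0 → n - k + 1 ≤ finrank K (span K (Set.range (x ᵥ* A)))

theorem sub_add_one_le_finrank_span_iff (hk : k ≤ n) (v : Fin n → L) :
    n - k + 1 ≤ finrank K (span K (Set.range v)) ↔
      finrank K (LinearMap.ker (Fintype.linearCombination K v)) < k := by
  have := LinearMap.finrank_range_add_finrank_ker (Fintype.linearCombination K v)
  rw [Fintype.range_linearCombination, finrank_fin_fun] at this
  omega

theorem linearCombination_vecMul_transpose {k' : ℕ} (x : Fin k → L)
    (A : Matrix (Fin k) (Fin n) L) (N : Matrix (Fin n) (Fin k') K) (j : Fin k') :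
    Fintype.linearCombination K (x ᵥ* A) (Nᵀ j) =
      (x ᵥ* (A * (N.map K.subtype).map (algebraMap F L))) j := by
  rw [← vecMul_vecMul, Fintype.linearCombination_apply, vecMul, dotProduct]
  refine Finset.sum_congr rfl fun i _ => ?_
  rw [Subfield.smul_def, Algebra.smul_def, mul_comm]
  rfl

theorem isMRD_iff_forall_isCREF (hk : k ≤ n) (A : Matrix (Fin k) (Fin n) L) :
    IsMRD K A ↔ ∀ N : Matrix (Fin n) (Fin k) K, IsCREF N →
      (A * (N.map K.subtype).map (algebraMap F L)).det ≠ 0 := by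
  simp only [IsMRD, sub_add_one_le_finrank_span_iff K hk, finrank_lt_iff_forall_isCREF,
    LinearMap.mem_ker, linearCombination_vecMul_transpose]
  refine ⟨fun h N hN hdet => ?_, fun h x hx N hN hxN => ?_⟩
  · obtain ⟨x, hx, hxN⟩ := exists_vecMul_eq_zero_iff.mpr hdet
    exact h x hx N hN (congrFun hxN)
  · exact h N hN (exists_vecMul_eq_zero_iff.mp ⟨x, hx, funext hxN⟩)

end MRD

theorem stmt_17_general
    (F : Type*) [Field F]
    (Fq : Subfield F)
    (n k : ℕ) (hkn : k ≤ n)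
    (G : Matrix (Fin k) (Fin n) (Polynomial F))
    (f : Polynomial F) [hfI : Fact (Irreducible f)] :
    (∀ x : Fin k → AdjoinRoot f, x ≠ 0 →
      n - k + 1 ≤ Module.finrank Fq
        (Submodule.span Fq (Set.range (Matrix.vecMul x (G.map (AdjoinRoot.mk f)))))) ↔
    (∀ M : Matrix (Fin n) (Fin k) F, (∀ i j, M i j ∈ Fq) → IsCREF M →
      ¬ f ∣ (G * M.map Polynomial.C).det) := by
  have hdet (M : Matrix (Fin n) (Fin k) F) :
      (G.map (AdjoinRoot.mk f) * M.map (algebraMap F (AdjoinRoot f))).det =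
        AdjoinRoot.mk f (G * M.map Polynomial.C).det := by
    rw [RingHom.map_det, RingHom.mapMatrix_apply, Matrix.map_mul, Matrix.map_map]
    rfl
  change IsMRD Fq (G.map (AdjoinRoot.mk f)) ↔ _
  rw [isMRD_iff_forall_isCREF Fq hkn, forall_mem_subfield_iff]
  refine forall_congr' fun N => ?_
  rw [IsCREF.map_iff, hdet, Ne, AdjoinRoot.mk_eq_zero]

set_option synthInstance.maxHeartbeats 1000000 in
set_option maxHeartbeats 1000000 in
/-- Let G over F_{q^m}[x] generate an MRD code over F_{q^m}(x)/K and f be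
irreducible of degree r. Then Ḡ = G mod f generates an MRD code over F_{q^{mr}}/F_q iff
det(GM) ≢ 0 mod f for every n×k matrix M over F_q of rank k in column reduced echelon
form. -/
theorem stmt_17 (p s m r : ℕ) [Fact p.Prime] (hs : 0 < s) (hm : 0 < m)
    (F : Type*) [Field F] [Fintype F] [CharP F p]
    (q : ℕ) (hq : q = p ^ s) (hcard : Fintype.card F = q ^ m)
    (lam : F) (hlam : lam ≠ 0)
    (hnorm : orderOf (lam ^ ((q ^ m - 1) / (q - 1))) = q - 1)
    (Fq : Subfield F) (hFq : ∀ a : F, a ∈ Fq ↔ a ^ q = a)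
    (n k : ℕ) (hn : n = m * (q - 1)) (hkn : k ≤ n)
    (e : RatFunc F ≃+* RatFunc F)
    (he : ∀ g : Polynomial F,
      e (algebraMap (Polynomial F) (RatFunc F) g) =
        algebraMap (Polynomial F) (RatFunc F)
          (∑ i ∈ Finset.range (g.natDegree + 1),
            Polynomial.C ((g.coeff i) ^ q * lam ^ i) * Polynomial.X ^ i))
    (G : Matrix (Fin k) (Fin n) (Polynomial F))
    (hMRD : ∀ x : Fin k → RatFunc F, x ≠ 0 →
      n - k + 1 ≤ Module.finrank (fixedSubfield e)
        (Submodule.span (fixedSubfield e)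
          (Set.range (Matrix.vecMul x
            (G.map (algebraMap (Polynomial F) (RatFunc F)))))))
    (f : Polynomial F) [hfI : Fact (Irreducible f)] (hr : f.natDegree = r) :
    (∀ x : Fin k → AdjoinRoot f, x ≠ 0 →
      n - k + 1 ≤ Module.finrank Fq
        (Submodule.span Fq (Set.range (Matrix.vecMul x (G.map (AdjoinRoot.mk f)))))) ↔
    (∀ M : Matrix (Fin n) (Fin k) F, (∀ i j, M i j ∈ Fq) → IsCREF M →
      ¬ f ∣ (G * M.map Polynomial.C).det) :=
  stmt_17_general F Fq n k hkn G f (hfI := hfI)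
end

section
/- Let F be a Ferrers diagram consisting of column heights (r_1 repeated m_1 times, r_2 repeated m_2 times, ..., r_n repeated m_n times) with r_1 < r_2 < ... < r_n, total number of columns M = Σ m_i. Fix minimum distance d and write d - 1 = Σ_{j=I}^n m_j - t with 1 ≤ t < m_I, and assume r_I ≥ M - d + 2. Then the Etzion–Silberstein bound for i = 0 dominates: the dimension of any [F, K, d] Ferrers diagram rank metric code satisfies K ≤ Σ_{j=1}^{I-1} r_j m_j + r_I t. -/
/-- Auxiliary: a matrix whose columns with index `< k0` all vanish has rank at most `M - k0`. -/
theorem aux_rank_le {Fq : Type*} [Field Fq] {R M k0 : ℕ} (hk0 : k0 ≤ M)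
    (X : Matrix (Fin R) (Fin M) Fq)
    (hz : ∀ (a : Fin R) (b : Fin M), (b : ℕ) < k0 → X a b = 0) :
    X.rank ≤ M - k0 := by
  set Z : Matrix (Fin R) (Fin (M - k0)) Fq :=
    fun a k => X a ⟨k0 + k, by omega⟩ with hZ
  set E : Matrix (Fin (M - k0)) (Fin M) Fq :=
    fun k j => if (j : ℕ) = k0 + k then 1 else 0 with hE
  have hfact : X = Z * E := by
    funext a j
    rw [Matrix.mul_apply]
    by_cases hj : (j : ℕ) < k0
    · rw [hz a j hj]
      refine (Finset.sum_eq_zero fun k _ => ?_).symm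
      have : E k j = 0 := by simp [hE]; omega
      rw [this, mul_zero]
    · push_neg at hj
      have hk : (j : ℕ) - k0 < M - k0 := by have := j.2; omega
      rw [Fintype.sum_eq_single (⟨(j : ℕ) - k0, hk⟩ : Fin (M - k0))]
      · have hEj : E ⟨(j : ℕ) - k0, hk⟩ j = 1 := by simp [hE]; omega
        have hZj : Z a ⟨(j : ℕ) - k0, hk⟩ = X a j := by
          simp only [hZ]
          congr 1
          exact Fin.ext (by simp; omega)
        rw [hEj, hZj, mul_one]
      · intro k hkne
        have : E k j = 0 := by
          simp only [hE, ite_eq_right_iff]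
          intro h
          exact absurd (Fin.ext (by simp; omega) : (⟨(j : ℕ) - k0, hk⟩ : Fin (M - k0)) = k).symm hkne
        rw [this, mul_zero]
  calc X.rank = (Z * E).rank := by rw [hfact]
    _ ≤ Z.rank := Matrix.rank_mul_le_left Z E
    _ ≤ M - k0 := by simpa using Z.rank_le_card_width

/-- For a Ferrers diagram with column heights r_1 (m_1 times), ...,
r_n (m_n times), r_1 < ... < r_n, M = Σ m_i columns, with d - 1 = Σ_{j=I}^n m_j - t,
1 ≤ t < m_I and r_I ≥ M - d + 2, any [F,K,d] Ferrers diagram rank metric code satisfies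
K ≤ Σ_{j=1}^{I-1} r_j m_j + r_I t. (Indices are 1-based; column b (0-based) has height
c (b+1).) -/
theorem stmt_18 (Fq : Type*) [Field Fq] [Fintype Fq]
    (n I t d M : ℕ) (r mm c : ℕ → ℕ)
    (hn : 0 < n) (hI1 : 1 ≤ I) (hIn : I ≤ n)
    (hmono : ∀ i j : ℕ, 1 ≤ i → i < j → j ≤ n → r i < r j)
    (hM : M = ∑ j ∈ Finset.Icc 1 n, mm j)
    (ht : 1 ≤ t) (htI : t < mm I) (hd1 : 1 ≤ d)
    (hd : d - 1 + t = ∑ j ∈ Finset.Icc I n, mm j)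
    (hrI : M - d + 2 ≤ r I)
    (hc : ∀ i j : ℕ, 1 ≤ i → i ≤ n →
      (∑ l ∈ Finset.Icc 1 (i - 1), mm l) < j → j ≤ ∑ l ∈ Finset.Icc 1 i, mm l →
      c j = r i)
    (C : Submodule Fq (Matrix (Fin (r n)) (Fin M) Fq))
    (hsupp : ∀ X ∈ C, ∀ (a : Fin (r n)) (b : Fin M),
      X a b ≠ 0 → (a : ℕ) + 1 ≤ c ((b : ℕ) + 1))
    (hdist : ∀ X ∈ C, X ≠ 0 → d ≤ X.rank) :
    Module.finrank Fq C ≤ (∑ j ∈ Finset.Icc 1 (I - 1), r j * mm j) + r I * t := by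
  classical
  obtain ⟨I', rfl⟩ : ∃ I', I = I' + 1 := ⟨I - 1, by omega⟩
  simp only [Nat.add_sub_cancel] at *
  set S : ℕ → ℕ := fun k => ∑ l ∈ Finset.Icc 1 k, mm l with hSdef
  have hIoc : ∀ x, Finset.Icc 1 x = Finset.Ioc 0 x := fun x => by
    rw [show (1 : ℕ) = 0 + 1 from rfl, Finset.Icc_add_one_left_eq_Ioc]
  have hS : ∀ k, S (k + 1) = S k + mm (k + 1) := by
    intro k
    simp only [hSdef]
    rw [Finset.sum_Icc_succ_top (by omega)]
  -- sum of a block of constant columns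
  have hblock : ∀ k, 1 ≤ k → k ≤ n → ∀ m', m' ≤ mm k →
      ∑ j ∈ Finset.Ioc (S (k - 1)) (S (k - 1) + m'), c j = r k * m' := by
    intro k hk1 hkn m' hm'
    obtain ⟨k', rfl⟩ : ∃ k', k = k' + 1 := ⟨k - 1, by omega⟩
    simp only [Nat.add_sub_cancel]
    have hconst : ∀ j ∈ Finset.Ioc (S k') (S k' + m'), c j = r (k' + 1) := by
      intro j hj
      rw [Finset.mem_Ioc] at hj
      refine hc (k' + 1) j (by omega) hkn ?_ ?_
      · exact hj.1
      · rw [show (∑ l ∈ Finset.Icc 1 (k' + 1), mm l) = S (k' + 1) from rfl, hS k']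
        omega
    rw [Finset.sum_congr rfl hconst, Finset.sum_const, Nat.card_Ioc, smul_eq_mul]
    have : S k' + m' - S k' = m' := by omega
    rw [this, Nat.mul_comm]
  -- full blocks sum
  have hfull : ∀ k, k ≤ n → ∑ j ∈ Finset.Ioc 0 (S k), c j = ∑ i ∈ Finset.Icc 1 k, r i * mm i := by
    intro k
    induction k with
    | zero => simp [hSdef]
    | succ k ih =>
      intro hkn
      have hle : S k ≤ S (k + 1) := by rw [hS k]; omega
      rw [← Finset.sum_Ioc_consecutive c (Nat.zero_le (S k)) hle, ih (by omega),
        Finset.sum_Icc_succ_top (by omega)]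
      have hb := hblock (k + 1) (by omega) hkn (mm (k + 1)) le_rfl
      simp only [Nat.add_sub_cancel] at hb
      rw [hS k]
      rw [hb]
  -- set k0
  set k0 : ℕ := S I' + t with hk0def
  have hsplitM : S I' + ∑ j ∈ Finset.Icc (I' + 1) n, mm j = M := by
    rw [hM]
    simp only [hSdef, hIoc, Finset.Icc_add_one_left_eq_Ioc]
    exact Finset.sum_Ioc_consecutive mm (Nat.zero_le I') (by omega : I' ≤ n)
  have hMk0 : M = k0 + (d - 1) := by omega
  have hk0M : k0 ≤ M := by omega
  -- the main column sum
  have hmain : ∑ j ∈ Finset.Ioc 0 k0, c j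
      = (∑ i ∈ Finset.Icc 1 I', r i * mm i) + r (I' + 1) * t := by
    rw [hk0def, ← Finset.sum_Ioc_consecutive c (Nat.zero_le (S I')) (Nat.le_add_right _ _),
      hfull I' (by omega)]
    have hb := hblock (I' + 1) (by omega) hIn t (le_of_lt htI)
    simp only [Nat.add_sub_cancel] at hb
    rw [hb]
  -- linear map into the restricted columns
  let V := (b : Fin k0) → (Fin (min (c ((b : ℕ) + 1)) (r n)) → Fq)
  let φ : C →ₗ[Fq] V :=
    { toFun := fun X b a =>
        (X : Matrix (Fin (r n)) (Fin M) Fq) ⟨a, lt_of_lt_of_le a.2 (min_le_right _ _)⟩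
          ⟨b, lt_of_lt_of_le b.2 hk0M⟩
      map_add' := by intro X Y; rfl
      map_smul' := by intro m X; rfl }
  have hinj : Function.Injective φ := by
    rw [injective_iff_map_eq_zero]
    intro X hX0
    ext1
    by_contra hXne
    have hz : ∀ (a : Fin (r n)) (b : Fin M), (b : ℕ) < k0 → (X : Matrix _ _ Fq) a b = 0 := by
      intro a b hb
      by_contra hne
      have ha : (a : ℕ) < min (c ((b : ℕ) + 1)) (r n) := by
        have := hsupp X.1 X.2 a b hne
        have := a.2
        omega
      have h0 : φ X ⟨b, hb⟩ ⟨a, ha⟩ = 0 := by rw [hX0]; rfl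
      exact hne h0
    have hrk := aux_rank_le hk0M X.1 hz
    have hrk2 := hdist X.1 X.2 hXne
    omega
  have hfd : FiniteDimensional Fq V := by
    infer_instance
  have hle : Module.finrank Fq C ≤ Module.finrank Fq V :=
    LinearMap.finrank_le_finrank_of_injective hinj
  have hVrank : Module.finrank Fq V = ∑ b : Fin k0, min (c ((b : ℕ) + 1)) (r n) := by
    rw [Module.finrank_pi_fintype]
    simp [Module.finrank_pi]
  have hsum : ∑ b : Fin k0, min (c ((b : ℕ) + 1)) (r n) ≤ ∑ j ∈ Finset.Ioc 0 k0, c j := by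
    rw [Fin.sum_univ_eq_sum_range (fun b => min (c (b + 1)) (r n)) k0]
    have : ∑ j ∈ Finset.Ioc 0 k0, c j = ∑ b ∈ Finset.range k0, c (b + 1) := by
      rw [← hIoc, ← Finset.Ico_add_one_right_eq_Icc, Finset.sum_Ico_eq_sum_range]
      simp [Nat.add_comm]
    rw [this]
    exact Finset.sum_le_sum fun b _ => min_le_left _ _
  calc Module.finrank Fq C ≤ Module.finrank Fq V := hle
    _ = ∑ b : Fin k0, min (c ((b : ℕ) + 1)) (r n) := hVrank
    _ ≤ ∑ j ∈ Finset.Ioc 0 k0, c j := hsum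
    _ = (∑ i ∈ Finset.Icc 1 I', r i * mm i) + r (I' + 1) * t := hmain
end
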